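/- arXiv:2603.11654 — 13 statements merged into one kernel-verified Lean document; each statement's English description precedes it below -/
import Mathlib

section
/- For positive integers n and 0 ≤ k ≤ n, and for each j with 0 ≤ j ≤ n, the number of lattice points x ∈ ℕ^n satisfying x_i ≤ 1 for 1 ≤ i ≤ k and x_1 + ⋯ + x_n ≤ n that have exactly j zero coordinates equals ∑_{i=0}^{n-k} C(n-k, i) · C(k, j-i) · C(n-k+j-i, j). -/
open Finset


lemma hockey (m : ℕ) : ∀ T, ∑ b ∈ range (T+1), (b + m).choose m = (T + m + 1).choose (m + 1) := by
  intro T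
  induction T with
  | zero => simp
  | succ T ih =>
    rw [Finset.sum_range_succ, ih]
    have e2 : T + 1 + m = T + m + 1 := by omega
    rw [e2, Nat.choose_succ_succ (T + m + 1) m]
    simp [Nat.succ_eq_add_one]
    omega

lemma adt_card (m : ℕ) : ∀ T, (Finset.Nat.antidiagonalTuple (m+1) T).card = (T + m).choose m := by
  induction m with
  | zero =>
    intro T
    rw [Finset.Nat.antidiagonalTuple_one]
    simp
  | succ m ih =>
    intro T
    have hmaps : ∀ f ∈ Finset.Nat.antidiagonalTuple (m+2) T, f 0 ∈ range (T+1) := by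
      intro f hf
      rw [Finset.Nat.mem_antidiagonalTuple] at hf
      rw [mem_range, Nat.lt_succ_iff, ← hf]
      exact Finset.single_le_sum (fun i _ => Nat.zero_le _) (mem_univ 0)
    rw [Finset.card_eq_sum_card_fiberwise hmaps]
    have hfib : ∀ a ∈ range (T+1),
        ((Finset.Nat.antidiagonalTuple (m+2) T).filter (fun f => f 0 = a)).card
          = (T - a + m).choose m := by
      intro a ha
      rw [mem_range, Nat.lt_succ_iff] at ha
      rw [← ih (T - a)]
      apply Finset.card_bij' (i := fun f _ => Fin.tail f) (j := fun g _ => Fin.cons a g)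
      case hi =>
        intro f hf
        simp only [mem_filter, Finset.Nat.mem_antidiagonalTuple] at hf
        rw [Finset.Nat.mem_antidiagonalTuple]
        have h1 := hf.1
        rw [Fin.sum_univ_succ, hf.2] at h1
        have h2 : ∑ i : Fin (m+1), Fin.tail f i = ∑ i : Fin (m+1), f i.succ := rfl
        omega
      case hj =>
        intro g hg
        rw [Finset.Nat.mem_antidiagonalTuple] at hg
        simp only [mem_filter, Finset.Nat.mem_antidiagonalTuple]
        refine ⟨?_, by simp⟩
        rw [Fin.sum_univ_succ]
        simp only [Fin.cons_zero, Fin.cons_succ]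
        omega
      case left_inv =>
        intro f hf
        simp only [mem_filter] at hf
        rw [← hf.2]
        exact Fin.cons_self_tail f
      case right_inv =>
        intro g _
        funext t
        simp [Fin.tail_cons]
    rw [Finset.sum_congr rfl hfib]
    have h3 : ∑ a ∈ range (T+1), (T - a + m).choose m = ∑ b ∈ range (T+1), (b + m).choose m := by
      rw [← Finset.sum_range_reflect (fun b => (b + m).choose m) (T+1)]
      apply Finset.sum_congr rfl
      intro b hb
      rw [mem_range, Nat.lt_succ_iff] at hb
      congr 2 <;> omega
    rw [h3, hockey]
    congr 1 <;> omega


lemma card_lower (n k : ℕ) (hk : k ≤ n) :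
    ((univ : Finset (Fin n)).filter (fun a : Fin n => (a : ℕ) < k)).card = k := by
  have h : (univ : Finset (Fin n)).filter (fun a : Fin n => (a : ℕ) < k)
      = Finset.map (Fin.castLEEmb hk) univ := by
    ext b
    simp only [mem_filter, mem_univ, true_and, Finset.mem_map, RelEmbedding.coe_toEmbedding]
    constructor
    · intro hb
      exact ⟨⟨(b : ℕ), hb⟩, by ext; simp [Fin.castLEEmb]⟩
    · rintro ⟨a, rfl⟩
      simpa [Fin.castLEEmb] using a.2
  rw [h, Finset.card_map, Finset.card_univ, Fintype.card_fin]

lemma card_upper (n k : ℕ) (hk : k ≤ n) :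
    ((univ : Finset (Fin n)).filter (fun a : Fin n => ¬ (a : ℕ) < k)).card = n - k := by
  have := Finset.card_filter_add_card_filter_not (s := (univ : Finset (Fin n)))
    (p := fun a : Fin n => (a : ℕ) < k)
  rw [card_lower n k hk, Finset.card_univ, Fintype.card_fin] at this
  omega

lemma split_count (n k j i : ℕ) (hk : k ≤ n) (hij : i ≤ j) :
    (((powersetCard j (univ : Finset (Fin n)))).filter
        (fun Z => (Z.filter (fun a : Fin n => ¬ (a : ℕ) < k)).card = i)).card
      = (n - k).choose i * k.choose (j - i) := by
  classical
  have key : (((powersetCard j (univ : Finset (Fin n)))).filter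
        (fun Z => (Z.filter (fun a : Fin n => ¬ (a : ℕ) < k)).card = i)).card
      = ((powersetCard i ((univ : Finset (Fin n)).filter (fun a : Fin n => ¬ (a : ℕ) < k))) ×ˢ
         (powersetCard (j - i) ((univ : Finset (Fin n)).filter (fun a : Fin n => (a : ℕ) < k)))).card := by
    apply Finset.card_bij'
      (i := fun Z _ => (Z.filter (fun a : Fin n => ¬ (a : ℕ) < k), Z.filter (fun a : Fin n => (a : ℕ) < k)))
      (j := fun P _ => P.1 ∪ P.2)
    case hi =>
      intro Z hZ
      simp only [mem_filter, Finset.mem_powersetCard] at hZ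
      obtain ⟨⟨-, hcard⟩, hI⟩ := hZ
      have hsplit := Finset.card_filter_add_card_filter_not (s := Z)
        (p := fun a : Fin n => (a : ℕ) < k)
      simp only [Finset.mem_product, Finset.mem_powersetCard]
      refine ⟨⟨fun a ha => ?_, hI⟩, ⟨fun a ha => ?_, ?_⟩⟩
      · simp only [mem_filter] at ha ⊢; exact ⟨mem_univ _, ha.2⟩
      · simp only [mem_filter] at ha ⊢; exact ⟨mem_univ _, ha.2⟩
      · omega
    case hj =>
      intro P hP
      simp only [Finset.mem_product, Finset.mem_powersetCard] at hP
      obtain ⟨⟨hP1, hc1⟩, hP2, hc2⟩ := hP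
      have hdisj : Disjoint P.1 P.2 := by
        apply Finset.disjoint_left.2
        intro a ha1 ha2
        have h1 := hP1 ha1; have h2 := hP2 ha2
        simp only [mem_filter] at h1 h2
        exact h1.2 h2.2
      have hfilt1 : (P.1 ∪ P.2).filter (fun a : Fin n => ¬ (a : ℕ) < k) = P.1 := by
        rw [Finset.filter_union]
        have e1 : P.1.filter (fun a : Fin n => ¬ (a : ℕ) < k) = P.1 :=
          Finset.filter_true_of_mem (fun a ha => by
            have := hP1 ha; simp only [mem_filter] at this; exact this.2)
        have e2 : P.2.filter (fun a : Fin n => ¬ (a : ℕ) < k) = ∅ :=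
          Finset.filter_false_of_mem (fun a ha => by
            have := hP2 ha; simp only [mem_filter] at this; simpa using this.2)
        rw [e1, e2, Finset.union_empty]
      simp only [mem_filter, Finset.mem_powersetCard]
      refine ⟨⟨fun a _ => mem_univ _, ?_⟩, ?_⟩
      · rw [Finset.card_union_of_disjoint hdisj]; omega
      · rw [hfilt1, hc1]
    case left_inv =>
      intro Z _
      simp only
      rw [Finset.union_comm, Finset.filter_union_filter_not_eq]
    case right_inv =>
      intro P hP
      simp only [Finset.mem_product, Finset.mem_powersetCard] at hP
      obtain ⟨⟨hP1, hc1⟩, hP2, hc2⟩ := hP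
      have hfilt1 : (P.1 ∪ P.2).filter (fun a : Fin n => ¬ (a : ℕ) < k) = P.1 := by
        rw [Finset.filter_union]
        have e1 : P.1.filter (fun a : Fin n => ¬ (a : ℕ) < k) = P.1 :=
          Finset.filter_true_of_mem (fun a ha => by
            have := hP1 ha; simp only [mem_filter] at this; exact this.2)
        have e2 : P.2.filter (fun a : Fin n => ¬ (a : ℕ) < k) = ∅ :=
          Finset.filter_false_of_mem (fun a ha => by
            have := hP2 ha; simp only [mem_filter] at this; simpa using this.2)
        rw [e1, e2, Finset.union_empty]
      have hfilt2 : (P.1 ∪ P.2).filter (fun a : Fin n => (a : ℕ) < k) = P.2 := by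
        rw [Finset.filter_union]
        have e1 : P.1.filter (fun a : Fin n => (a : ℕ) < k) = ∅ :=
          Finset.filter_false_of_mem (fun a ha => by
            have := hP1 ha; simp only [mem_filter] at this; exact this.2)
        have e2 : P.2.filter (fun a : Fin n => (a : ℕ) < k) = P.2 :=
          Finset.filter_true_of_mem (fun a ha => by
            have := hP2 ha; simp only [mem_filter] at this; exact this.2)
        rw [e1, e2, Finset.empty_union]
      exact Prod.ext hfilt1 hfilt2
  rw [key, Finset.card_product, Finset.card_powersetCard, Finset.card_powersetCard,
    card_upper n k hk, card_lower n k hk]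

lemma fiber_card (n k j i : ℕ) (hn : 0 < n) (hk : k ≤ n) (hj : j ≤ n)
    (Z : Finset (Fin n)) (hZc : Z.card = j)
    (hZi : (Z.filter (fun a : Fin n => ¬ (a : ℕ) < k)).card = i) :
    (((Fintype.piFinset fun _ : Fin n => Finset.range (n+1)).filter
      (fun x => (∀ t : Fin n, (t : ℕ) < k → x t ≤ 1) ∧ (∑ t, x t ≤ n) ∧
          (univ.filter (fun a => x a = 0)).card = j)).filter
      (fun x => univ.filter (fun a => x a = 0) = Z)).card
      = (n - k + j - i).choose j := by
  classical
  have hij : i ≤ j := by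
    rw [← hZi, ← hZc]; exact Finset.card_le_card (Finset.filter_subset _ _)
  have hlowZ : (Z.filter (fun a : Fin n => (a : ℕ) < k)).card = j - i := by
    have := Finset.card_filter_add_card_filter_not (s := Z)
      (p := fun a : Fin n => (a : ℕ) < k)
    omega
  have hjik : j - i ≤ k := by
    have h1 : (Z.filter (fun a : Fin n => (a : ℕ) < k)).card
        ≤ ((univ : Finset (Fin n)).filter (fun a : Fin n => (a : ℕ) < k)).card :=
      Finset.card_le_card (Finset.filter_subset_filter _ (Finset.subset_univ Z))
    rw [card_lower n k hk] at h1
    omega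
  have hink : i ≤ n - k := by
    have h1 : (Z.filter (fun a : Fin n => ¬ (a : ℕ) < k)).card
        ≤ ((univ : Finset (Fin n)).filter (fun a : Fin n => ¬ (a : ℕ) < k)).card :=
      Finset.card_le_card (Finset.filter_subset_filter _ (Finset.subset_univ Z))
    rw [card_upper n k hk] at h1
    omega
  set m := n - k - i with hm
  set W : Finset (Fin n) := univ.filter (fun a : Fin n => a ∉ Z ∧ ¬ (a : ℕ) < k) with hWdef
  have hW : W.card = m := by
    have hsplitU := Finset.card_filter_add_card_filter_not
      (s := (univ : Finset (Fin n)).filter (fun a : Fin n => ¬ (a : ℕ) < k))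
      (p := fun a : Fin n => a ∈ Z)
    have e1 : ((univ : Finset (Fin n)).filter (fun a : Fin n => ¬ (a : ℕ) < k)).filter
        (fun a => a ∈ Z) = Z.filter (fun a : Fin n => ¬ (a : ℕ) < k) := by
      ext a; simp only [mem_filter, mem_univ, true_and]; all_goals tauto
    have e2 : ((univ : Finset (Fin n)).filter (fun a : Fin n => ¬ (a : ℕ) < k)).filter
        (fun a => ¬ a ∈ Z) = W := by
      ext a; simp only [hWdef, mem_filter, mem_univ, true_and]; all_goals tauto
    rw [e1, e2, hZi, card_upper n k hk] at hsplitU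
    omega
  set L' : Finset (Fin n) := univ.filter (fun a : Fin n => a ∉ Z ∧ (a : ℕ) < k) with hLdef
  have hL : L'.card = k - (j - i) := by
    have hsplitL := Finset.card_filter_add_card_filter_not
      (s := (univ : Finset (Fin n)).filter (fun a : Fin n => (a : ℕ) < k))
      (p := fun a : Fin n => a ∈ Z)
    have e1 : ((univ : Finset (Fin n)).filter (fun a : Fin n => (a : ℕ) < k)).filter
        (fun a => a ∈ Z) = Z.filter (fun a : Fin n => (a : ℕ) < k) := by
      ext a; simp only [mem_filter, mem_univ, true_and]; all_goals tauto
    have e2 : ((univ : Finset (Fin n)).filter (fun a : Fin n => (a : ℕ) < k)).filter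
        (fun a => ¬ a ∈ Z) = L' := by
      ext a; simp only [hLdef, mem_filter, mem_univ, true_and]; all_goals tauto
    rw [e1, e2, hlowZ, card_lower n k hk] at hsplitL
    omega
  set e : Fin m ≃ {a // a ∈ W} := (W.orderIsoOfFin hW).toEquiv with hedef
  have heW : ∀ t : Fin m, (↑(e t) : Fin n) ∉ Z ∧ ¬ ((↑(e t) : Fin n) : ℕ) < k :=
    fun t => (Finset.mem_filter.1 (e t).2).2
  have hmemW : ∀ a : Fin n, a ∉ Z → ¬ (a : ℕ) < k → a ∈ W :=
    fun a h1 h2 => Finset.mem_filter.2 ⟨mem_univ a, h1, h2⟩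
  -- key sum decomposition
  have hsum : ∀ x : Fin n → ℕ, (∀ a, a ∈ Z → x a = 0) →
      (∀ a : Fin n, (a : ℕ) < k → a ∉ Z → x a = 1) →
      ∑ a, x a = (k - (j - i)) + ∑ t : Fin m, x ↑(e t) := by
    intro x h0 h1
    have split1 := Finset.sum_filter_add_sum_filter_not (univ : Finset (Fin n))
      (fun a => a ∈ Z) x
    have hz : ∑ a ∈ univ.filter (fun a => a ∈ Z), x a = 0 :=
      Finset.sum_eq_zero (fun a ha => h0 a (by simpa using ha))
    have split2 := Finset.sum_filter_add_sum_filter_not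
      ((univ : Finset (Fin n)).filter (fun a => ¬ a ∈ Z))
      (fun a : Fin n => (a : ℕ) < k) x
    have eL : ((univ : Finset (Fin n)).filter (fun a => ¬ a ∈ Z)).filter
        (fun a : Fin n => (a : ℕ) < k) = L' := by
      ext a; simp only [hLdef, mem_filter, mem_univ, true_and]; all_goals tauto
    have eW : ((univ : Finset (Fin n)).filter (fun a => ¬ a ∈ Z)).filter
        (fun a : Fin n => ¬ (a : ℕ) < k) = W := by
      ext a; simp only [hWdef, mem_filter, mem_univ, true_and]; all_goals tauto
    have hLsum : ∑ a ∈ L', x a = k - (j - i) := by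
      rw [← hL, Finset.card_eq_sum_ones]
      apply Finset.sum_congr rfl
      intro a ha
      rw [hLdef, Finset.mem_filter] at ha
      exact h1 a ha.2.2 ha.2.1
    have hWsum : ∑ a ∈ W, x a = ∑ t : Fin m, x ↑(e t) := by
      rw [← Finset.sum_coe_sort W x]
      exact (Fintype.sum_equiv e _ _ (fun t => rfl)).symm
    rw [eL, eW, hLsum, hWsum] at split2
    rw [hz] at split1
    omega
  -- the two maps
  set Φf : (Fin n → ℕ) → Fin (m+1) → ℕ :=
    fun x => Fin.snoc (fun t : Fin m => x ↑(e t) - 1) (n - ∑ a, x a) with hΦf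
  set Ψf : (Fin (m+1) → ℕ) → Fin n → ℕ :=
    fun z a => if haZ : a ∈ Z then 0 else if hak : (a : ℕ) < k then 1
      else z (Fin.castSucc (e.symm ⟨a, hmemW a haZ hak⟩)) + 1 with hΨf
  have hΨZ : ∀ z, ∀ a ∈ Z, Ψf z a = 0 := fun z a ha => by rw [hΨf]; simp [ha]
  have hΨL : ∀ z, ∀ a : Fin n, (a : ℕ) < k → a ∉ Z → Ψf z a = 1 := by
    intro z a hak haZ; rw [hΨf]; simp [haZ, hak]
  have hΨW : ∀ z, ∀ t : Fin m, Ψf z ↑(e t) = z t.castSucc + 1 := by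
    intro z t
    obtain ⟨h1, h2⟩ := heW t
    rw [hΨf]
    simp only [dif_neg h1, dif_neg h2]
    rw [show (⟨(↑(e t) : Fin n), hmemW _ h1 h2⟩ : {a // a ∈ W}) = e t from Subtype.ext rfl,
      Equiv.symm_apply_apply]
  have hΨiff : ∀ z, ∀ a : Fin n, Ψf z a = 0 ↔ a ∈ Z := by
    intro z a
    constructor
    · intro h
      by_contra haZ
      rw [hΨf] at h
      simp only [dif_neg haZ] at h
      by_cases hak : (a : ℕ) < k
      · simp [hak] at h
      · simp [hak] at h
    · exact hΨZ z a
  have hΨsum : ∀ z, ∑ a, Ψf z a = (k - (j - i)) + (∑ t : Fin m, z t.castSucc + m) := by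
    intro z
    rw [hsum (Ψf z) (hΨZ z) (hΨL z)]
    congr 1
    rw [Finset.sum_congr rfl (fun t _ => hΨW z t), Finset.sum_add_distrib]
    simp
  have h1 : n - k + j - i = j + m := by omega
  have h3 : j + m - j = m := by omega
  -- the bijection
  have key : (((Fintype.piFinset fun _ : Fin n => Finset.range (n+1)).filter
      (fun x => (∀ t : Fin n, (t : ℕ) < k → x t ≤ 1) ∧ (∑ t, x t ≤ n) ∧
          (univ.filter (fun a => x a = 0)).card = j)).filter
      (fun x => univ.filter (fun a => x a = 0) = Z)).card
      = (Finset.Nat.antidiagonalTuple (m+1) j).card := by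
    apply Finset.card_bij' (i := fun x _ => Φf x) (j := fun z _ => Ψf z)
    case hi =>
      intro x hx
      simp only [mem_filter, Fintype.mem_piFinset, mem_range] at hx
      obtain ⟨⟨-, hle1, hsle, -⟩, hzZ⟩ := hx
      have hiff : ∀ a : Fin n, x a = 0 ↔ a ∈ Z := by
        intro a
        rw [← hzZ, Finset.mem_filter]
        simp
      rw [Finset.Nat.mem_antidiagonalTuple, Fin.sum_univ_castSucc, hΦf]
      simp only [Fin.snoc_castSucc, Fin.snoc_last]
      have hge : ∀ t : Fin m, 1 ≤ x ↑(e t) := by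
        intro t
        have h := (heW t).1
        have h3 : x ↑(e t) ≠ 0 := fun h0 => h ((hiff _).1 h0)
        omega
      have hsub : ∑ t : Fin m, (x ↑(e t) - 1) + m = ∑ t : Fin m, x ↑(e t) := by
        have h' : ∑ t : Fin m, ((x ↑(e t) - 1) + 1) = ∑ t : Fin m, x ↑(e t) :=
          Finset.sum_congr rfl (fun t _ => by have := hge t; omega)
        rw [Finset.sum_add_distrib] at h'
        simpa using h'
      have hS := hsum x (fun a ha => (hiff a).2 ha)
        (fun a hak haZ => by
          have h1 := hle1 a hak
          have h2 : x a ≠ 0 := fun h0 => haZ ((hiff a).1 h0)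
          omega)
      omega
    case hj =>
      intro z hz
      rw [Finset.Nat.mem_antidiagonalTuple] at hz
      have hzc : ∑ t : Fin m, z t.castSucc + z (Fin.last m) = j := by
        rw [← Fin.sum_univ_castSucc]; exact hz
      have hsz := hΨsum z
      have hΨle : ∑ a, Ψf z a ≤ n := by omega
      simp only [mem_filter, Fintype.mem_piFinset, mem_range]
      refine ⟨⟨fun a => ?_, fun t htk => ?_, hΨle, ?_⟩, ?_⟩
      · have : Ψf z a ≤ ∑ b, Ψf z b :=
          Finset.single_le_sum (fun b _ => Nat.zero_le _) (mem_univ a)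
        omega
      · by_cases haZ : t ∈ Z
        · rw [hΨZ z t haZ]; omega
        · rw [hΨL z t htk haZ]
      · rw [show univ.filter (fun a => Ψf z a = 0) = Z from by
          ext a; simp only [mem_filter, mem_univ, true_and]; exact hΨiff z a]
        exact hZc
      · ext a; simp only [mem_filter, mem_univ, true_and]; exact hΨiff z a
    case left_inv =>
      intro x hx
      simp only [mem_filter, Fintype.mem_piFinset, mem_range] at hx
      obtain ⟨⟨-, hle1, -, -⟩, hzZ⟩ := hx
      have hiff : ∀ a : Fin n, x a = 0 ↔ a ∈ Z := by
        intro a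
        rw [← hzZ, Finset.mem_filter]
        simp
      funext a
      by_cases haZ : a ∈ Z
      · rw [hΨf]
        simp only [dif_pos haZ]
        exact ((hiff a).2 haZ).symm
      · by_cases hak : (a : ℕ) < k
        · rw [hΨf]
          simp only [dif_neg haZ, dif_pos hak]
          have h1 := hle1 a hak
          have h2 : x a ≠ 0 := fun h0 => haZ ((hiff a).1 h0)
          omega
        · rw [hΨf]
          simp only [dif_neg haZ, dif_neg hak]
          rw [hΦf]
          simp only [Fin.snoc_castSucc]
          have hex : (↑(e (e.symm ⟨a, hmemW a haZ hak⟩)) : Fin n) = a := by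
            rw [Equiv.apply_symm_apply]
          rw [hex]
          have hxa : 1 ≤ x a := by
            have h2 : x a ≠ 0 := fun h0 => haZ ((hiff a).1 h0)
            omega
          omega
    case right_inv =>
      intro z hz
      rw [Finset.Nat.mem_antidiagonalTuple] at hz
      have hzc : ∑ t : Fin m, z t.castSucc + z (Fin.last m) = j := by
        rw [← Fin.sum_univ_castSucc]; exact hz
      have hsz := hΨsum z
      funext s
      refine Fin.lastCases ?_ ?_ s
      · rw [hΦf]
        simp only [Fin.snoc_last]
        omega
      · intro t
        rw [hΦf]
        simp only [Fin.snoc_castSucc]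
        rw [hΨW z t]
        omega
  rw [key, adt_card m j]
  have h2 : (j + m).choose (j + m - j) = (j + m).choose j :=
    Nat.choose_symm (Nat.le_add_right j m)
  rw [h3] at h2
  rw [h1, ← h2]


theorem stmt_0 (n k j : ℕ) (hn : 0 < n) (hk : k ≤ n) (hj : j ≤ n) :
    {x : Fin n → ℕ |
        (∀ i : Fin n, (i : ℕ) < k → x i ≤ 1) ∧ (∑ i, x i ≤ n) ∧
        (Finset.univ.filter (fun i => x i = 0)).card = j}.ncard =
      ∑ i ∈ Finset.range (n - k + 1),
        (n - k).choose i *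
          (if i ≤ j then k.choose (j - i) * (n - k + j - i).choose j else 0) := by
  have hsetF : {x : Fin n → ℕ |
        (∀ i : Fin n, (i : ℕ) < k → x i ≤ 1) ∧ (∑ i, x i ≤ n) ∧
        (Finset.univ.filter (fun i => x i = 0)).card = j} =
      ↑((Fintype.piFinset fun _ : Fin n => Finset.range (n+1)).filter
        (fun x => (∀ t : Fin n, (t : ℕ) < k → x t ≤ 1) ∧ (∑ t, x t ≤ n) ∧
          (univ.filter (fun a => x a = 0)).card = j)) := by
    ext x
    simp only [Set.mem_setOf_eq, Finset.mem_coe, Finset.mem_filter, Fintype.mem_piFinset,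
      mem_range]
    constructor
    · rintro ⟨h1, h2, h3⟩
      refine ⟨fun a => ?_, h1, h2, h3⟩
      have := Finset.single_le_sum (f := x) (fun b _ => Nat.zero_le _) (mem_univ a)
      omega
    · rintro ⟨-, h⟩; exact h
  rw [hsetF, Set.ncard_coe_finset]
  have hmaps : ∀ x ∈ (Fintype.piFinset fun _ : Fin n => Finset.range (n+1)).filter
        (fun x => (∀ t : Fin n, (t : ℕ) < k → x t ≤ 1) ∧ (∑ t, x t ≤ n) ∧
          (univ.filter (fun a => x a = 0)).card = j),
      univ.filter (fun a => x a = 0) ∈ powersetCard j (univ : Finset (Fin n)) := by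
    intro x hx
    rw [Finset.mem_powersetCard_univ]
    exact (Finset.mem_filter.1 hx).2.2.2
  rw [Finset.card_eq_sum_card_fiberwise hmaps]
  have hfib : ∀ Z ∈ powersetCard j (univ : Finset (Fin n)),
      (((Fintype.piFinset fun _ : Fin n => Finset.range (n+1)).filter
        (fun x => (∀ t : Fin n, (t : ℕ) < k → x t ≤ 1) ∧ (∑ t, x t ≤ n) ∧
          (univ.filter (fun a => x a = 0)).card = j)).filter
        (fun x => univ.filter (fun a => x a = 0) = Z)).card
      = (n - k + j - (Z.filter (fun a : Fin n => ¬ (a : ℕ) < k)).card).choose j := by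
    intro Z hZ
    exact fiber_card n k j _ hn hk hj Z (Finset.mem_powersetCard_univ.1 hZ) rfl
  rw [Finset.sum_congr rfl hfib]
  have hmaps2 : ∀ Z ∈ powersetCard j (univ : Finset (Fin n)),
      (Z.filter (fun a : Fin n => ¬ (a : ℕ) < k)).card ∈ range (n - k + 1) := by
    intro Z _
    rw [mem_range, Nat.lt_succ_iff]
    have h1 : (Z.filter (fun a : Fin n => ¬ (a : ℕ) < k)).card
        ≤ ((univ : Finset (Fin n)).filter (fun a : Fin n => ¬ (a : ℕ) < k)).card :=
      Finset.card_le_card (Finset.filter_subset_filter _ (Finset.subset_univ Z))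
    rw [card_upper n k hk] at h1
    exact h1
  rw [← Finset.sum_fiberwise_of_maps_to hmaps2
    (fun Z => (n - k + j - (Z.filter (fun a : Fin n => ¬ (a : ℕ) < k)).card).choose j)]
  apply Finset.sum_congr rfl
  intro i hi
  by_cases hij : i ≤ j
  · rw [if_pos hij]
    have hconst : ∀ Z ∈ (powersetCard j (univ : Finset (Fin n))).filter
          (fun Z => (Z.filter (fun a : Fin n => ¬ (a : ℕ) < k)).card = i),
        (n - k + j - (Z.filter (fun a : Fin n => ¬ (a : ℕ) < k)).card).choose j
          = (n - k + j - i).choose j := by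
      intro Z hZ
      rw [(Finset.mem_filter.1 hZ).2]
    rw [Finset.sum_congr rfl hconst, Finset.sum_const, smul_eq_mul,
      split_count n k j i hk hij, mul_assoc]
  · rw [if_neg hij, mul_zero]
    have hemp : (powersetCard j (univ : Finset (Fin n))).filter
        (fun Z => (Z.filter (fun a : Fin n => ¬ (a : ℕ) < k)).card = i) = ∅ := by
      rw [Finset.filter_eq_empty_iff]
      intro Z hZ hc
      have h1 : (Z.filter (fun a : Fin n => ¬ (a : ℕ) < k)).card ≤ Z.card :=
        Finset.card_le_card (Finset.filter_subset _ _)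
      rw [hc, Finset.mem_powersetCard_univ.1 hZ] at h1
      omega
    rw [hemp]
    simp
end

section
/- For positive integers n and 0 ≤ k ≤ n, the polynomial identity ∑_{j=0}^{n} (∑_{i=0}^{n-k} C(n-k,i)·C(k,j-i)·C(n-k+j-i,j)) t^{n-j} = ∑_{r=0}^{⌊n/2⌋} C(n-k,r)·C(n-r,r)·t^r·(1+t)^{n-2r} holds in ℤ[t]. -/
/-!
Comparing coefficients of `X ^ m` and writing `j = n - m`, `q = n - k`, the claim becomes
`∑ᵢ C(q,i) C(k,j-i) C(q+j-i,j) = ∑ᵣ C(q,r) C(n-r,r) C(n-2r,m-r)`.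
Trinomial revision turns the right-hand summand into `C(q,r) C(j,r) C(n-r,j)`. Expanding
`C(n-r,j) = C((q-r)+k,j)` by Vandermonde, revising `C(q,r) C(q-r,i) = C(q,i) C(q-i,r)`
and summing over `r` by Vandermonde again, `∑ᵣ C(q-i,r) C(j,r) = C(q-i+j,j)`, gives the
left-hand side.
-/

open Finset Polynomial

namespace Nat

theorem choose_mul_choose_sub_comm (q r s : ℕ) :
    q.choose r * (q - r).choose s = q.choose s * (q - s).choose r := by
  have hr := choose_mul (n := q) (le_add_right r s)
  have hs := choose_mul (n := q) (le_add_left s r)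
  rw [Nat.add_sub_cancel_left] at hr
  rw [Nat.add_sub_cancel] at hs
  rw [← hr, ← hs, choose_symm_add]

theorem add_choose_eq_sum_range (a b j : ℕ) {N : ℕ} (ha : a < N) :
    (a + b).choose j = ∑ t ∈ range N, a.choose t * if t ≤ j then b.choose (j - t) else 0 := by
  have hvanish : ∀ t ≥ min a j + 1, (a.choose t * if t ≤ j then b.choose (j - t) else 0) = 0 := by
    intro t ht
    rcases le_or_gt t j with htj | htj
    · rw [choose_eq_zero_of_lt (by omega), zero_mul]
    · rw [if_neg (by omega), mul_zero]
  rw [add_choose_eq,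
    Finset.Nat.sum_antidiagonal_eq_sum_range_succ (fun s t => a.choose s * b.choose t),
    eventually_constant_sum hvanish (by omega : min a j + 1 ≤ N),
    ← eventually_constant_sum hvanish (by omega : min a j + 1 ≤ j + 1)]
  exact sum_congr rfl fun t ht => by rw [if_pos (mem_range_succ_iff.1 ht)]

theorem sum_range_choose_mul_choose (a b : ℕ) {N : ℕ} (ha : a < N) :
    ∑ r ∈ range N, a.choose r * b.choose r = (a + b).choose b := by
  rw [add_choose_eq_sum_range a b b ha]
  refine sum_congr rfl fun r _ => ?_
  split_ifs with h
  · rw [choose_symm h]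
  · rw [choose_eq_zero_of_lt (not_le.1 h)]

theorem sum_range_choose_mul_choose_mul_add_sub_choose (q k j : ℕ) {N : ℕ} (hq : q < N) :
    ∑ r ∈ range N, q.choose r * j.choose r * (q + k - r).choose j =
      ∑ i ∈ range (q + 1),
        q.choose i * if i ≤ j then k.choose (j - i) * (q + j - i).choose j else 0 := by
  have hexpand : ∀ r, q.choose r * j.choose r * (q + k - r).choose j =
      ∑ t ∈ range (q + 1),
        (if t ≤ j then k.choose (j - t) else 0) * q.choose t * ((q - t).choose r * j.choose r) := by
    intro r
    rcases le_or_gt r q with hrq | hrq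
    · rw [show q + k - r = q - r + k by omega,
        add_choose_eq_sum_range (q - r) k j (N := q + 1) (by omega), mul_sum]
      refine sum_congr rfl fun t _ => ?_
      calc _ = (if t ≤ j then k.choose (j - t) else 0) * (q.choose r * (q - r).choose t) *
              j.choose r := by ring
        _ = _ := by rw [choose_mul_choose_sub_comm]; ring
    · rw [choose_eq_zero_of_lt hrq, zero_mul, zero_mul]
      refine (sum_eq_zero fun t _ => ?_).symm
      rw [choose_eq_zero_of_lt (by omega : q - t < r), zero_mul, mul_zero]
  rw [sum_congr rfl fun r _ => hexpand r, sum_comm]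
  refine sum_congr rfl fun t ht => ?_
  have htq := mem_range_succ_iff.1 ht
  rw [← mul_sum, sum_range_choose_mul_choose (q - t) j (by omega),
    show q - t + j = q + j - t by omega]
  split_ifs <;> ring

theorem choose_sub_mul_choose_sub_two_mul {n j m r : ℕ} (hn : j + m = n) :
    (n - r).choose r * (if r ≤ m then (n - 2 * r).choose (m - r) else 0) =
      j.choose r * (n - r).choose j := by
  by_cases h : r ≤ m ∧ r ≤ j
  · obtain ⟨hrm, hrj⟩ := h
    have hsub : n - r - r = n - 2 * r := by omega
    have hsplit : n - 2 * r = (m - r) + (j - r) := by omega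
    rw [if_pos hrm, mul_comm (j.choose r), choose_mul hrj, hsub, choose_symm_of_eq_add hsplit]
  have hleft : (n - r).choose r * (if r ≤ m then (n - 2 * r).choose (m - r) else 0) = 0 := by
    split_ifs with hrm
    · rcases le_or_gt (2 * r) n with h2r | h2r
      · rw [choose_eq_zero_of_lt (by omega : n - 2 * r < m - r), mul_zero]
      · rw [choose_eq_zero_of_lt (by omega : n - r < r), zero_mul]
    · exact mul_zero _
  have hright : j.choose r * (n - r).choose j = 0 := by
    rcases le_or_gt r j with hrj | hrj
    · rw [choose_eq_zero_of_lt (by omega : n - r < j), mul_zero]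
    · rw [choose_eq_zero_of_lt hrj, zero_mul]
  rw [hleft, hright]

end Nat

theorem sum_range_choose_mul_ite_eq_sum_range_half {n k j m : ℕ} (hk : k ≤ n) (hn : j + m = n) :
    ∑ i ∈ range (n - k + 1), (n - k).choose i *
        (if i ≤ j then k.choose (j - i) * (n - k + j - i).choose j else 0) =
      ∑ r ∈ range (n / 2 + 1), (n - k).choose r * (n - r).choose r *
        (if r ≤ m then (n - 2 * r).choose (m - r) else 0) := by
  have hvanish : ∀ r ≥ n / 2 + 1, (n - k).choose r * j.choose r * (n - r).choose j = 0 := by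
    intro r hr
    rw [mul_assoc, ← Nat.choose_sub_mul_choose_sub_two_mul hn,
      Nat.choose_eq_zero_of_lt (by omega : n - r < r), zero_mul, mul_zero]
  calc _ = ∑ r ∈ range (n + 1), (n - k).choose r * j.choose r * (n - k + k - r).choose j :=
        (Nat.sum_range_choose_mul_choose_mul_add_sub_choose _ _ _ (by omega)).symm
    _ = ∑ r ∈ range (n / 2 + 1), (n - k).choose r * j.choose r * (n - r).choose j := by
        rw [Nat.sub_add_cancel hk, eventually_constant_sum hvanish (by omega)]
    _ = _ := sum_congr rfl fun r _ => by
        rw [mul_assoc, mul_assoc, Nat.choose_sub_mul_choose_sub_two_mul hn]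

theorem stmt_1_general (n k : ℕ) (hk : k ≤ n) :
    (∑ j ∈ Finset.range (n + 1),
        C (((∑ i ∈ Finset.range (n - k + 1),
            (n - k).choose i *
              (if i ≤ j then k.choose (j - i) * (n - k + j - i).choose j else 0) : ℕ) : ℤ)) *
          X ^ (n - j)) =
      ∑ r ∈ Finset.range (n / 2 + 1),
        C ((((n - k).choose r * (n - r).choose r : ℕ) : ℤ)) * X ^ r *
          (1 + X) ^ (n - 2 * r) := by
  ext m
  simp only [finsetSum_coeff, coeff_C_mul_X_pow]
  simp only [mul_assoc, coeff_C_mul, coeff_X_pow_mul', coeff_one_add_X_pow]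
  rcases le_or_gt m n with hmn | hnm
  · rw [sum_eq_single_of_mem (n - m) (mem_range.2 (by omega))
        fun j hj _ => if_neg (by have := mem_range.1 hj; omega),
      if_pos (by omega), sum_range_choose_mul_ite_eq_sum_range_half hk (by omega : n - m + m = n)]
    push_cast
    simp only [mul_ite, mul_zero, mul_assoc]
  · rw [sum_eq_zero fun j hj => if_neg (by have := mem_range.1 hj; omega)]
    refine (sum_eq_zero fun r hr => ?_).symm
    have := mem_range.1 hr
    rw [Nat.choose_eq_zero_of_lt (by omega : n - 2 * r < m - r)]
    simp

theorem stmt_1 (n k : ℕ) (hn : 0 < n) (hk : k ≤ n) :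
    (∑ j ∈ Finset.range (n + 1),
        C (((∑ i ∈ Finset.range (n - k + 1),
            (n - k).choose i *
              (if i ≤ j then k.choose (j - i) * (n - k + j - i).choose j else 0) : ℕ) : ℤ)) *
          X ^ (n - j)) =
      ∑ r ∈ Finset.range (n / 2 + 1),
        C ((((n - k).choose r * (n - r).choose r : ℕ) : ℤ)) * X ^ r *
          (1 + X) ^ (n - 2 * r) :=
  stmt_1_general n k hk
end

section
/- For positive integers n and 0 ≤ k ≤ n, the polynomial h(τ_{n,k}, t) := ∑_{j=0}^{n} h_j t^j, where h_{n-j} = ∑_{i=0}^{n-k} C(n-k,i)·C(k,j-i)·C(n-k+j-i,j), is palindromic: h_j = h_{n-j} for all 0 ≤ j ≤ n. -/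
/-!
Put `m = n - k` and `S j = ∑_{a+b=j} C(m,a) C(k,b) C(m+b,j)`, so that `h (n - j) = S j`.
The substitution `(a, b) ↦ (k - b, m - a)` of the nonzero terms gives `S j = U (n - j)`, where
`U j = ∑_{a+b=j} C(k,a) C(m,b) C(m+k-a,b)`. Expanding the last binomial of `S j` and of `U j`
by Vandermonde, the two double sums agree term by term by trinomial revision
`C(k,a) C(k-a,t) = C(k,a+t) C(a+t,a)`, so `U = S` and `S j = S (n - j)`.
-/

open Finset

theorem Nat.choose_mul_choose_sub_eq (n a b : ℕ) :
    n.choose a * (n - a).choose b = n.choose (a + b) * (a + b).choose a := by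
  simpa using (Nat.choose_mul (n := n) (Nat.le_add_right a b)).symm

def hCoeff (m k j : ℕ) : ℕ :=
  ∑ p ∈ antidiagonal j, m.choose p.1 * k.choose p.2 * (m + p.2).choose j

def hCoeffDual (m k j : ℕ) : ℕ :=
  ∑ p ∈ antidiagonal j, k.choose p.1 * m.choose p.2 * (m + (k - p.1)).choose p.2

theorem sum_range_mul_ite_eq_hCoeff (m k j : ℕ) :
    ∑ i ∈ range (m + 1), m.choose i *
        (if i ≤ j then k.choose (j - i) * (m + j - i).choose j else 0) = hCoeff m k j := by
  rw [hCoeff, Nat.sum_antidiagonal_eq_sum_range_succ_mk]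
  simp only [mul_ite, mul_zero, ← sum_filter]
  refine sum_subset_zero_on_sdiff (fun i hi => ?_) (fun i hi => ?_) (fun i hi => ?_)
  · simp only [mem_filter, mem_range] at hi ⊢; omega
  · simp only [mem_sdiff, mem_filter, mem_range] at hi
    rw [Nat.choose_eq_zero_of_lt (by omega : m < i)]; simp
  · simp only [mem_filter] at hi
    rw [Nat.add_sub_assoc hi.2, mul_assoc]

theorem hCoeff_eq_hCoeffDual_sub {m k j : ℕ} (hj : j ≤ m + k) :
    hCoeff m k j = hCoeffDual m k (m + k - j) := by
  refine sum_bij_ne_zero (fun p _ _ => (k - p.2, m - p.1)) ?_ ?_ ?_ ?_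
  · intro p hp hne
    simp only [mul_ne_zero_iff, ne_eq, Nat.choose_eq_zero_iff, not_lt,
      HasAntidiagonal.mem_antidiagonal] at hp hne ⊢
    omega
  · intro p hp hne q hq hne' hpq
    simp only [mul_ne_zero_iff, ne_eq, Nat.choose_eq_zero_iff, not_lt,
      HasAntidiagonal.mem_antidiagonal, Prod.ext_iff] at hp hne hq hne' hpq ⊢
    omega
  · intro q hq hne
    simp only [mul_ne_zero_iff, ne_eq, Nat.choose_eq_zero_iff, not_lt,
      HasAntidiagonal.mem_antidiagonal] at hq hne
    refine ⟨(m - q.2, k - q.1), ?_, ?_, ?_⟩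
    · simp only [HasAntidiagonal.mem_antidiagonal]; omega
    · simp only [mul_ne_zero_iff, ne_eq, Nat.choose_eq_zero_iff, not_lt]; omega
    · simp only [Prod.ext_iff]; omega
  · intro p hp hne
    simp only [mul_ne_zero_iff, ne_eq, Nat.choose_eq_zero_iff, not_lt,
      HasAntidiagonal.mem_antidiagonal] at hp hne
    rw [Nat.choose_symm hne.1.1, Nat.choose_symm hne.1.2, Nat.sub_sub_self hne.1.2,
      Nat.choose_symm_of_eq_add (by omega : m + p.2 = j + (m - p.1))]
    ring

theorem hCoeff_eq_sum_sum (m k j : ℕ) :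
    hCoeff m k j = ∑ s ∈ range (j + 1), ∑ l ∈ range (j + 1),
      m.choose s * k.choose (j - s) * (j - s).choose l * m.choose (j - l) := by
  rw [hCoeff, Nat.sum_antidiagonal_eq_sum_range_succ_mk]
  refine sum_congr rfl fun s _ => ?_
  rw [add_comm m, Nat.add_choose_eq, Nat.sum_antidiagonal_eq_sum_range_succ_mk, mul_sum]
  simp only [mul_assoc]

theorem hCoeffDual_eq_sum_sum (m k j : ℕ) :
    hCoeffDual m k j = ∑ s ∈ range (j + 1), ∑ l ∈ range (j + 1),
      m.choose s * k.choose (j - s) * (j - s).choose l * m.choose (j - l) := by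
  rw [hCoeffDual, Nat.sum_antidiagonal_eq_sum_range_succ_mk, sum_comm]
  refine sum_congr rfl fun l hl => ?_
  rw [mem_range] at hl
  rw [Nat.add_choose_eq, Nat.sum_antidiagonal_eq_sum_range_succ_mk, mul_sum]
  refine sum_subset_zero_on_sdiff (range_subset_range.mpr (by omega)) (fun s hs => ?_)
    (fun s hs => ?_)
  · simp only [mem_sdiff, mem_range] at hs
    rw [Nat.choose_eq_zero_of_lt (by omega : j - s < l)]; simp
  · rw [mem_range] at hs
    have hrev := Nat.choose_mul_choose_sub_eq k l (j - l - s)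
    rw [(by omega : l + (j - l - s) = j - s)] at hrev
    calc k.choose l * m.choose (j - l) * (m.choose s * (k - l).choose (j - l - s))
        = k.choose l * (k - l).choose (j - l - s) * m.choose s * m.choose (j - l) := by ring
      _ = m.choose s * k.choose (j - s) * (j - s).choose l * m.choose (j - l) := by
        rw [hrev]; ring

theorem hCoeffDual_eq_hCoeff (m k j : ℕ) : hCoeffDual m k j = hCoeff m k j := by
  rw [hCoeff_eq_sum_sum, hCoeffDual_eq_sum_sum]

theorem hCoeff_symm {m k j : ℕ} (hj : j ≤ m + k) :
    hCoeff m k j = hCoeff m k (m + k - j) :=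
  (hCoeff_eq_hCoeffDual_sub hj).trans (hCoeffDual_eq_hCoeff m k _)

theorem stmt_2_general (n k : ℕ) (hk : k ≤ n)
    (h : ℕ → ℕ)
    (hdef : ∀ j ≤ n, h (n - j) =
      ∑ i ∈ Finset.range (n - k + 1),
        (n - k).choose i *
          (if i ≤ j then k.choose (j - i) * (n - k + j - i).choose j else 0)) :
    ∀ j ≤ n, h j = h (n - j) := by
  intro j hj
  have hn : n - k + k = n := Nat.sub_add_cancel hk
  have hj' := hdef (n - j) (Nat.sub_le n j)
  rw [Nat.sub_sub_self hj] at hj'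
  rw [hj', hdef j hj, sum_range_mul_ite_eq_hCoeff, sum_range_mul_ite_eq_hCoeff,
    hCoeff_symm (by omega : j ≤ n - k + k), hn]

/-- `h (n-j)` : the coefficient of `t^(n-j)` in `h(τ_{n,k}, t)`. -/
theorem stmt_2 (n k : ℕ) (hn : 0 < n) (hk : k ≤ n)
    (h : ℕ → ℕ)
    (hdef : ∀ j ≤ n, h (n - j) =
      ∑ i ∈ Finset.range (n - k + 1),
        (n - k).choose i *
          (if i ≤ j then k.choose (j - i) * (n - k + j - i).choose j else 0)) :
    ∀ j ≤ n, h j = h (n - j) :=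
  stmt_2_general n k hk h hdef
end

section
/- For positive integers n and 0 ≤ k ≤ n, the coefficient sequence of h(τ_{n,k}, t) = ∑_{r=0}^{⌊n/2⌋} C(n-k,r)·C(n-r,r)·t^r·(1+t)^{n-2r} is unimodal. -/
open Finset Polynomial

lemma my_choose_asc {N j : ℕ} (h : 2*j + 2 ≤ N) : N.choose j ≤ N.choose (j+1) :=
  Nat.choose_le_succ_of_lt_half_left (by omega)

lemma my_choose_desc {N j : ℕ} (h : N ≤ 2*j + 1) : N.choose (j+1) ≤ N.choose j := by
  rcases lt_or_ge N (j+1) with h1 | h1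
  · simp [Nat.choose_eq_zero_of_lt h1]
  rcases eq_or_lt_of_le h with h2 | h2
  · -- N = 2j+1, then N - (j+1) = j and N - j = j+1
    have e1 : N - j = j + 1 := by omega
    refine le_of_eq ?_
    calc N.choose (j+1) = N.choose (N - j) := by rw [e1]
    _ = N.choose j := Nat.choose_symm (by omega)
  · -- N ≤ 2j, so a := N - j - 1 < N/2
    have hj : j ≤ N := by omega
    have e1 : N - (j+1) + 1 = N - j := by omega
    calc N.choose (j+1) = N.choose (N - (j+1)) := (Nat.choose_symm h1).symm
    _ ≤ N.choose (N - (j+1) + 1) := my_choose_asc (by omega)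
    _ = N.choose (N - j) := by rw [e1]
    _ = N.choose j := Nat.choose_symm hj

lemma coeff_term (c r N i : ℕ) :
    ((C (c : ℕ) * X ^ r * (1 + X) ^ N : ℕ[X])).coeff i =
      c * (if r ≤ i then N.choose (i - r) else 0) := by
  rw [mul_assoc, mul_comm (X ^ r), ← mul_assoc, coeff_mul_X_pow', coeff_C_mul,
    coeff_one_add_X_pow]
  split <;> simp

theorem stmt_3 (n k : ℕ) (hn : 0 < n) (hk : k ≤ n) :
    ∃ m ≤ n,
      (∀ i < m, ((∑ r ∈ Finset.range (n / 2 + 1),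
          C (((n - k).choose r * (n - r).choose r : ℕ)) * X ^ r *
            (1 + X) ^ (n - 2 * r) : ℕ[X])).coeff i ≤
        ((∑ r ∈ Finset.range (n / 2 + 1),
          C (((n - k).choose r * (n - r).choose r : ℕ)) * X ^ r *
            (1 + X) ^ (n - 2 * r) : ℕ[X])).coeff (i + 1)) ∧
      (∀ i, m ≤ i → i < n → ((∑ r ∈ Finset.range (n / 2 + 1),
          C (((n - k).choose r * (n - r).choose r : ℕ)) * X ^ r *
            (1 + X) ^ (n - 2 * r) : ℕ[X])).coeff (i + 1) ≤
        ((∑ r ∈ Finset.range (n / 2 + 1),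
          C (((n - k).choose r * (n - r).choose r : ℕ)) * X ^ r *
            (1 + X) ^ (n - 2 * r) : ℕ[X])).coeff i) := by
  refine ⟨n / 2, by omega, ?_, ?_⟩
  · intro i hi
    rw [finset_sum_coeff, finset_sum_coeff]
    refine Finset.sum_le_sum fun r hr => ?_
    rw [Finset.mem_range] at hr
    rw [coeff_term, coeff_term]
    refine Nat.mul_le_mul_left _ ?_
    by_cases hri : r ≤ i
    · rw [if_pos hri, if_pos (by omega)]
      have : i + 1 - r = (i - r) + 1 := by omega
      rw [this]
      exact my_choose_asc (by omega)
    · rw [if_neg hri]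
      exact Nat.zero_le _
  · intro i hi hin
    rw [finset_sum_coeff, finset_sum_coeff]
    refine Finset.sum_le_sum fun r hr => ?_
    rw [Finset.mem_range] at hr
    rw [coeff_term, coeff_term]
    refine Nat.mul_le_mul_left _ ?_
    have hri : r ≤ i := by omega
    rw [if_pos hri, if_pos (by omega)]
    have : i + 1 - r = (i - r) + 1 := by omega
    rw [this]
    exact my_choose_desc (by omega)
end

section
/- For every positive integer n, the polynomial q_n(t) = ∑_{i=0}^{⌊n/2⌋} C(n-i, i) t^i has only real roots. -/
open Finset Polynomial

/-- The Fibonacci-type polynomial `q_n(t) = ∑_{i=0}^{⌊n/2⌋} C(n-i, i) t^i`, over `ℝ`. -/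
noncomputable def fibPolyR (n : ℕ) : Polynomial ℝ :=
  ∑ i ∈ Finset.range (n / 2 + 1), C (((n - i).choose i : ℕ) : ℝ) * X ^ i

/-!
Put `z = -u v` with `u + v = 1`. The sums `q_n(z)` satisfy the Fibonacci-type recurrence
`q_{n+2} = q_{n+1} + z q_n`, whose characteristic roots are `u` and `v`, so
`(u - v) q_n(-u v) = u^(n+1) - v^(n+1)`. At a root `z` this forces `|u| = |v| = |1 - u|`,
so `u` lies on the line `Re u = 1/2`; then `v = conj u` and `z = -|u|^2` is real.
-/

section DiagonalChooseSum

variable {R : Type*}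

/-- `∑_{a + b = n} C(a, b) z^b`, the evaluation of `q_n` at `z` without the truncation at `n/2`. -/
def diagChooseSum [CommSemiring R] (n : ℕ) (z : R) : R :=
  ∑ p ∈ antidiagonal n, (p.1.choose p.2 : R) * z ^ p.2

theorem diagChooseSum_add_two [CommSemiring R] (n : ℕ) (z : R) :
    diagChooseSum (n + 2) z = diagChooseSum (n + 1) z + z * diagChooseSum n z := by
  rw [diagChooseSum, Nat.sum_antidiagonal_succ', Nat.sum_antidiagonal_succ, diagChooseSum,
    Nat.sum_antidiagonal_succ', diagChooseSum, mul_sum]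
  simp_rw [mul_left_comm z, ← pow_succ', Nat.choose_succ_succ', Nat.cast_add, add_mul,
    sum_add_distrib]
  simp only [Nat.choose_zero_right, Nat.choose_zero_succ, Nat.cast_one, Nat.cast_zero, pow_zero,
    mul_one, zero_mul, zero_add]
  abel

theorem sub_mul_diagChooseSum [CommRing R] (n : ℕ) {u v : R} (h : u + v = 1) :
    (u - v) * diagChooseSum n (-(u * v)) = u ^ (n + 1) - v ^ (n + 1) := by
  induction n using Nat.twoStepInduction with
  | zero => simp [diagChooseSum]
  | one =>
    rw [show diagChooseSum 1 (-(u * v)) = 1 by simp [diagChooseSum, Nat.sum_antidiagonal_succ]]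
    linear_combination (v - u) * h
  | more n ih₁ ih₂ =>
    rw [diagChooseSum_add_two]
    linear_combination ih₂ - u * v * ih₁ - (u ^ (n + 2) - v ^ (n + 2)) * h

end DiagonalChooseSum

theorem aeval_fibPolyR (n : ℕ) (z : ℂ) : aeval z (fibPolyR n) = diagChooseSum n z := by
  rw [diagChooseSum, ← Nat.sum_antidiagonal_swap, Nat.sum_antidiagonal_eq_sum_range_succ_mk]
  simp only [fibPolyR, map_sum, map_mul, map_pow, aeval_C, aeval_X, Complex.coe_algebraMap,
    Complex.ofReal_natCast, Prod.swap]
  refine sum_subset (range_subset_range.2 (by omega)) fun i hi hi' => ?_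
  simp only [mem_range] at hi hi'
  simp [Nat.choose_eq_zero_of_lt (show n - i < i by omega)]

theorem Complex.re_eq_half_of_norm_eq_norm_one_sub {u : ℂ} (h : ‖u‖ = ‖1 - u‖) : u.re = 1 / 2 := by
  have := congrArg (· ^ 2) h
  simp only [Complex.sq_norm, normSq_apply, sub_re, sub_im, one_re, one_im] at this
  linarith

theorem Complex.im_mul_eq_zero_of_add_eq_one_of_norm_eq {u v : ℂ} (h : u + v = 1)
    (hn : ‖u‖ = ‖v‖) : (u * v).im = 0 := by
  obtain rfl : v = 1 - u := by linear_combination h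
  have := re_eq_half_of_norm_eq_norm_one_sub hn
  simp only [mul_im, sub_re, sub_im, one_re, one_im, this]
  ring

theorem Complex.exists_add_eq_one_mul_eq (z : ℂ) : ∃ u v : ℂ, u + v = 1 ∧ u * v = z := by
  obtain ⟨w, hw⟩ := IsAlgClosed.exists_eq_mul_self (1 - 4 * z)
  exact ⟨(1 + w) / 2, (1 - w) / 2, by ring, by linear_combination hw / 4⟩

theorem stmt_5_general (n : ℕ) :
    ∀ z : ℂ, Polynomial.aeval z (fibPolyR n) = 0 → z.im = 0 := by
  intro z hz
  obtain ⟨u, v, huv, huvz⟩ := Complex.exists_add_eq_one_mul_eq (-z)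
  obtain rfl : -(u * v) = z := neg_eq_iff_eq_neg.2 huvz
  have hpow : u ^ (n + 1) = v ^ (n + 1) := by
    have := sub_mul_diagChooseSum n huv
    rw [← aeval_fibPolyR, hz, mul_zero] at this
    linear_combination -this
  have hnorm : ‖u‖ = ‖v‖ := by
    simpa using congrArg (‖·‖) hpow
  rw [Complex.neg_im, neg_eq_zero]
  exact Complex.im_mul_eq_zero_of_add_eq_one_of_norm_eq huv hnorm

/-- `q_n` has only real roots: every complex root is real. -/
theorem stmt_5 (n : ℕ) (hn : 0 < n) :
    ∀ z : ℂ, Polynomial.aeval z (fibPolyR n) = 0 → z.im = 0 :=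
  stmt_5_general n
end

section
/- For positive integers n, k with 0 ≤ k ≤ n and every natural number m, the number of lattice points x ∈ ℕ^n with x_1 + ⋯ + x_n ≤ mn and x_i ≤ m for 1 ≤ i ≤ k equals ∑_{j=0}^{k} (-1)^j · C(k,j) · C((n-j)(m+1), n). -/
open Finset

lemma multiset_card_eq_sum_count {d : ℕ} (s : Multiset (Fin d)) :
    Multiset.card s = ∑ i, s.count i := by
  rw [← Multiset.toFinset_sum_count_eq]
  exact Finset.sum_subset (Finset.subset_univ _) (fun x _ hx => by
    simpa [Multiset.count_eq_zero] using fun h => hx (Multiset.mem_toFinset.2 h))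

noncomputable def tupleSymEquiv (d N : ℕ) :
    Sym (Fin d) N ≃ {x : Fin d → ℕ // ∑ i, x i = N} :=
  Equiv.subtypeEquiv (Multiset.toFinsupp.toEquiv.trans Finsupp.equivFunOnFinite)
    (fun s => by
      simp only [Equiv.trans_apply, AddEquiv.toEquiv_eq_coe, EquivLike.coe_coe]
      rw [multiset_card_eq_sum_count]
      constructor <;> intro h <;> rw [← h] <;> exact Finset.sum_congr rfl (fun i _ => by
        simp [Multiset.toFinsupp_apply]))

lemma card_sum_eq (d N : ℕ) :
    Nat.card {x : Fin d → ℕ // ∑ i, x i = N} = (d + N - 1).choose N := by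
  rw [← Nat.card_congr (tupleSymEquiv d N), Nat.card_eq_fintype_card,
    Sym.card_sym_eq_choose]
  simp

noncomputable def slackEquiv (n N : ℕ) :
    {x : Fin (n+1) → ℕ // ∑ i, x i = N} ≃ {x : Fin n → ℕ // ∑ i, x i ≤ N} where
  toFun x := ⟨Fin.tail x.1, by
    have h := x.2
    rw [Fin.sum_univ_succ] at h
    simp only [Fin.tail]
    omega⟩
  invFun y := ⟨Fin.cons (N - ∑ i, y.1 i) y.1, by
    rw [Fin.sum_cons]
    have := y.2
    omega⟩
  left_inv x := by
    apply Subtype.ext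
    have h := x.2
    rw [Fin.sum_univ_succ] at h
    have h2 : N - ∑ i, Fin.tail x.1 i = x.1 0 := by
      simp only [Fin.tail]; omega
    show Fin.cons (N - ∑ i, Fin.tail x.1 i) (Fin.tail x.1) = x.1
    rw [h2, Fin.cons_self_tail]
  right_inv y := by
    apply Subtype.ext
    funext i
    simp [Fin.tail]

lemma card_sum_le (n N : ℕ) :
    Nat.card {x : Fin n → ℕ // ∑ i, x i ≤ N} = (N + n).choose n := by
  rw [← Nat.card_congr (slackEquiv n N), card_sum_eq]
  have h1 : n + 1 + N - 1 = N + n := by omega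
  rw [h1, Nat.choose_symm_add]

lemma finite_aux (n N : ℕ) (Q : (Fin n → ℕ) → Prop) :
    Finite {x : Fin n → ℕ // ∑ i, x i ≤ N ∧ Q x} := by
  have : {x : Fin n → ℕ | ∑ i, x i ≤ N ∧ Q x}.Finite := by
    apply Set.Finite.subset (Set.Finite.pi (fun (i : Fin n) => Set.finite_Iic N))
    intro x hx
    simp only [Set.mem_pi, Set.mem_univ, Set.mem_Iic, forall_true_left]
    intro i
    exact le_trans (Finset.single_le_sum (f := x) (fun _ _ => Nat.zero_le _)
      (Finset.mem_univ i)) hx.1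
  exact this.to_subtype

noncomputable def Tcard (n m N k : ℕ) : ℕ :=
  Nat.card {x : Fin n → ℕ // ∑ i, x i ≤ N ∧ ∀ i : Fin n, (i : ℕ) < k → x i ≤ m}

lemma Tcard_zero (n m N : ℕ) : Tcard n m N 0 = (N + n).choose n := by
  rw [Tcard, Nat.card_congr (Equiv.subtypeEquivRight (q := fun x => ∑ i, x i ≤ N)
    (fun x => by simp)), card_sum_le]

lemma sum_update_eq (n : ℕ) (f : Fin n → ℕ) (K : Fin n) (v : ℕ) :
    ∑ i, Function.update f K v i = v + (∑ i, f i - f K) := by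
  rw [Finset.sum_update_of_mem (Finset.mem_univ K), ← Finset.erase_eq]
  congr 1
  rw [← Finset.add_sum_erase _ f (Finset.mem_univ K)]
  omega

lemma f_le_sum (n : ℕ) (f : Fin n → ℕ) (K : Fin n) : f K ≤ ∑ i, f i :=
  Finset.single_le_sum (fun _ _ => Nat.zero_le _) (Finset.mem_univ K)

noncomputable def shiftEquiv (n m N k : ℕ) (hkn : k < n) (h : m + 1 ≤ N) :
    {x : Fin n → ℕ //
        (∑ i, x i ≤ N ∧ ∀ i : Fin n, (i : ℕ) < k → x i ≤ m) ∧ ¬ x ⟨k, hkn⟩ ≤ m} ≃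
    {x : Fin n → ℕ // ∑ i, x i ≤ N - (m + 1) ∧ ∀ i : Fin n, (i : ℕ) < k → x i ≤ m} where
  toFun x := ⟨Function.update x.1 ⟨k, hkn⟩ (x.1 ⟨k, hkn⟩ - (m + 1)), by
    obtain ⟨⟨h1, h2⟩, h3⟩ := x.2
    refine ⟨?_, ?_⟩
    · rw [sum_update_eq]
      have := f_le_sum n x.1 ⟨k, hkn⟩
      omega
    · intro i hi
      rw [Function.update_of_ne (by rintro rfl; simp at hi)]
      exact h2 i hi⟩
  invFun y := ⟨Function.update y.1 ⟨k, hkn⟩ (y.1 ⟨k, hkn⟩ + (m + 1)), by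
    obtain ⟨h1, h2⟩ := y.2
    refine ⟨⟨?_, ?_⟩, ?_⟩
    · rw [sum_update_eq]
      have := f_le_sum n y.1 ⟨k, hkn⟩
      omega
    · intro i hi
      rw [Function.update_of_ne (by rintro rfl; simp at hi)]
      exact h2 i hi
    · rw [Function.update_self]
      omega⟩
  left_inv x := by
    obtain ⟨⟨h1, h2⟩, h3⟩ := x.2
    apply Subtype.ext
    simp only [Function.update_idem, Function.update_self]
    have hv : x.1 ⟨k, hkn⟩ - (m + 1) + (m + 1) = x.1 ⟨k, hkn⟩ := by omega
    rw [hv, Function.update_eq_self]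
  right_inv y := by
    apply Subtype.ext
    simp only [Function.update_idem, Function.update_self]
    have hv : y.1 ⟨k, hkn⟩ + (m + 1) - (m + 1) = y.1 ⟨k, hkn⟩ := by omega
    rw [hv, Function.update_eq_self]

lemma Tcard_succ_le (n m N k : ℕ) (hkn : k < n) (h : m + 1 ≤ N) :
    Tcard n m N k = Tcard n m N (k + 1) + Tcard n m (N - (m + 1)) k := by
  classical
  haveI := finite_aux n N (fun x => ∀ i : Fin n, (i : ℕ) < k → x i ≤ m)
  rw [Tcard, ← Nat.card_congr
    (Equiv.sumCompl (fun x : {x : Fin n → ℕ //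
      ∑ i, x i ≤ N ∧ ∀ i : Fin n, (i : ℕ) < k → x i ≤ m} => x.1 ⟨k, hkn⟩ ≤ m)),
    Nat.card_sum]
  congr 1
  · rw [Tcard]
    apply Nat.card_congr
    refine (Equiv.subtypeSubtypeEquivSubtypeInter
        (fun x : Fin n → ℕ => ∑ i, x i ≤ N ∧ ∀ i : Fin n, (i : ℕ) < k → x i ≤ m)
        (fun x => x ⟨k, hkn⟩ ≤ m)).trans
      (Equiv.subtypeEquivRight (fun x => ?_))
    constructor
    · rintro ⟨⟨h1, h2⟩, h3⟩
      refine ⟨h1, fun i hi => ?_⟩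
      rcases Nat.lt_succ_iff_lt_or_eq.1 hi with hlt | heq
      · exact h2 i hlt
      · have : i = ⟨k, hkn⟩ := Fin.ext heq
        rw [this]; exact h3
    · rintro ⟨h1, h2⟩
      exact ⟨⟨h1, fun i hi => h2 i (Nat.lt_succ_of_lt hi)⟩,
        h2 ⟨k, hkn⟩ (Nat.lt_succ_self k)⟩
  · rw [Tcard]
    exact Nat.card_congr ((Equiv.subtypeSubtypeEquivSubtypeInter
      (fun x : Fin n → ℕ => ∑ i, x i ≤ N ∧ ∀ i : Fin n, (i : ℕ) < k → x i ≤ m)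
      (fun x => ¬ x ⟨k, hkn⟩ ≤ m)).trans (shiftEquiv n m N k hkn h))

lemma Tcard_succ_lt (n m N k : ℕ) (h : N < m + 1) :
    Tcard n m N (k + 1) = Tcard n m N k := by
  rw [Tcard, Tcard]
  apply Nat.card_congr
  refine Equiv.subtypeEquivRight (fun x => ?_)
  constructor
  · rintro ⟨h1, h2⟩
    exact ⟨h1, fun i hi => h2 i (Nat.lt_succ_of_lt hi)⟩
  · rintro ⟨h1, h2⟩
    refine ⟨h1, fun i _ => ?_⟩
    have := f_le_sum n x i
    omega

lemma alt_pascal (c : ℕ → ℤ) (k : ℕ) :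
    ∑ j ∈ Finset.range (k + 2), (-1 : ℤ) ^ j * ((k + 1).choose j : ℤ) * c j =
      ∑ j ∈ Finset.range (k + 1), (-1 : ℤ) ^ j * (k.choose j : ℤ) * c j -
        ∑ j ∈ Finset.range (k + 1), (-1 : ℤ) ^ j * (k.choose j : ℤ) * c (j + 1) := by
  have hfg : ∀ j ∈ Finset.range (k + 1),
      (-1 : ℤ) ^ (j + 1) * ((k + 1).choose (j + 1) : ℤ) * c (j + 1) =
        (-1 : ℤ) ^ (j + 1) * (k.choose (j + 1) : ℤ) * c (j + 1) -
          (-1 : ℤ) ^ j * (k.choose j : ℤ) * c (j + 1) := by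
    intro j _
    rw [Nat.choose_succ_succ]
    push_cast
    ring
  calc ∑ j ∈ Finset.range (k + 2), (-1 : ℤ) ^ j * ((k + 1).choose j : ℤ) * c j
      = ∑ j ∈ Finset.range (k + 1),
          (-1 : ℤ) ^ (j + 1) * ((k + 1).choose (j + 1) : ℤ) * c (j + 1) +
          (-1 : ℤ) ^ 0 * ((k + 1).choose 0 : ℤ) * c 0 :=
        Finset.sum_range_succ' _ (k + 1)
    _ = ∑ j ∈ Finset.range (k + 1),
          ((-1 : ℤ) ^ (j + 1) * (k.choose (j + 1) : ℤ) * c (j + 1) -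
            (-1 : ℤ) ^ j * (k.choose j : ℤ) * c (j + 1)) + c 0 := by
        rw [Finset.sum_congr rfl hfg]; norm_num
    _ = (∑ j ∈ Finset.range (k + 1),
          (-1 : ℤ) ^ (j + 1) * (k.choose (j + 1) : ℤ) * c (j + 1) + c 0) -
          ∑ j ∈ Finset.range (k + 1), (-1 : ℤ) ^ j * (k.choose j : ℤ) * c (j + 1) := by
        rw [Finset.sum_sub_distrib]; ring
    _ = (∑ j ∈ Finset.range k,
          (-1 : ℤ) ^ (j + 1) * (k.choose (j + 1) : ℤ) * c (j + 1) + c 0) -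
          ∑ j ∈ Finset.range (k + 1), (-1 : ℤ) ^ j * (k.choose j : ℤ) * c (j + 1) := by
        rw [Finset.sum_range_succ
          (fun j => (-1 : ℤ) ^ (j + 1) * (k.choose (j + 1) : ℤ) * c (j + 1)) k]
        simp [Nat.choose_succ_self]
    _ = ∑ j ∈ Finset.range (k + 1), (-1 : ℤ) ^ j * (k.choose j : ℤ) * c j -
          ∑ j ∈ Finset.range (k + 1), (-1 : ℤ) ^ j * (k.choose j : ℤ) * c (j + 1) := by
        rw [Finset.sum_range_succ'
          (fun j => (-1 : ℤ) ^ j * (k.choose j : ℤ) * c j) k]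
        norm_num

lemma main_aux (n m : ℕ) (hn : 0 < n) : ∀ k, k ≤ n → ∀ N,
    (Tcard n m N k : ℤ) = ∑ j ∈ Finset.range (k + 1),
      (-1 : ℤ) ^ j * (k.choose j : ℤ) *
        ((((N : ℤ) + n - j * (m + 1)).toNat).choose n : ℤ) := by
  intro k
  induction k with
  | zero =>
    intro _ N
    rw [Tcard_zero]
    rw [Finset.sum_range_one]
    simp only [Nat.cast_zero]
    have h : ((N : ℤ) + n - 0 * ((m : ℤ) + 1)).toNat = N + n := by omega
    rw [h]
    simp
  | succ k ih =>
    intro hk N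
    have hkn : k < n := hk
    have hL : ∑ j ∈ Finset.range (k + 1 + 1),
        (-1 : ℤ) ^ j * ((k + 1).choose j : ℤ) *
          ((((N : ℤ) + n - j * (m + 1)).toNat).choose n : ℤ) =
        ∑ j ∈ Finset.range (k + 1), (-1 : ℤ) ^ j * (k.choose j : ℤ) *
          ((((N : ℤ) + n - j * (m + 1)).toNat).choose n : ℤ) -
        ∑ j ∈ Finset.range (k + 1), (-1 : ℤ) ^ j * (k.choose j : ℤ) *
          ((((N : ℤ) + n - (j + 1) * (m + 1)).toNat).choose n : ℤ) := by
      have := alt_pascal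
        (fun j => ((((N : ℤ) + n - j * (m + 1)).toNat).choose n : ℤ)) k
      push_cast at this ⊢
      convert this using 2
    rw [hL]
    by_cases hN : m + 1 ≤ N
    · have hrec := Tcard_succ_le n m N k hkn hN
      have hcast : ((N - (m + 1) : ℕ) : ℤ) = (N : ℤ) - (m + 1) := by omega
      have h2 := ih (le_of_lt hkn) (N - (m + 1))
      rw [hcast] at h2
      have h2' : (Tcard n m (N - (m + 1)) k : ℤ) =
          ∑ j ∈ Finset.range (k + 1), (-1 : ℤ) ^ j * (k.choose j : ℤ) *
            ((((N : ℤ) + n - (j + 1) * (m + 1)).toNat).choose n : ℤ) := by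
        rw [h2]
        apply Finset.sum_congr rfl
        intro j _
        have harg : (N : ℤ) - ((m : ℤ) + 1) + n - (j : ℤ) * ((m : ℤ) + 1) =
            (N : ℤ) + n - ((j : ℤ) + 1) * ((m : ℤ) + 1) := by ring
        rw [harg]
      rw [← ih (le_of_lt hkn) N, ← h2']
      have : (Tcard n m N k : ℤ) = Tcard n m N (k + 1) + Tcard n m (N - (m + 1)) k := by
        exact_mod_cast congrArg (Nat.cast : ℕ → ℤ) hrec
      omega
    · push_neg at hN
      rw [Tcard_succ_lt n m N k hN, ih (le_of_lt hkn) N]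
      have hz : ∑ j ∈ Finset.range (k + 1), (-1 : ℤ) ^ j * (k.choose j : ℤ) *
          ((((N : ℤ) + n - (j + 1) * (m + 1)).toNat).choose n : ℤ) = 0 := by
        apply Finset.sum_eq_zero
        intro j _
        have hj : (((N : ℤ) + n - ((j : ℤ) * ((m : ℤ) + 1) + ((m : ℤ) + 1))).toNat) < n := by
          have h0 : (0 : ℤ) ≤ (j : ℤ) * ((m : ℤ) + 1) := by positivity
          omega
        have harg : (N : ℤ) + n - ((j : ℤ) + 1) * ((m : ℤ) + 1) =
            (N : ℤ) + n - ((j : ℤ) * ((m : ℤ) + 1) + ((m : ℤ) + 1)) := by ring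
        rw [harg, Nat.choose_eq_zero_of_lt hj]
        simp
      rw [hz, sub_zero]

theorem stmt_6 (n k m : ℕ) (hn : 0 < n) (hk : k ≤ n) :
    ({x : Fin n → ℕ |
        (∑ i, x i ≤ m * n) ∧ ∀ i : Fin n, (i : ℕ) < k → x i ≤ m}.ncard : ℤ) =
      ∑ j ∈ Finset.range (k + 1),
        (-1) ^ j * (k.choose j : ℤ) * (((n - j) * (m + 1)).choose n : ℤ) := by
  have hset : {x : Fin n → ℕ |
      (∑ i, x i ≤ m * n) ∧ ∀ i : Fin n, (i : ℕ) < k → x i ≤ m}.ncard =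
      Tcard n m (m * n) k := by
    rw [← Nat.card_coe_set_eq]
    rfl
  rw [hset, main_aux n m hn k hk (m * n)]
  apply Finset.sum_congr rfl
  intro j hj
  have hjk : j ≤ n := le_trans (Nat.lt_succ_iff.1 (Finset.mem_range.1 hj)) hk
  congr 2
  have harg : ((m * n : ℕ) : ℤ) + n - j * ((m : ℤ) + 1) = (((n - j) * (m + 1) : ℕ) : ℤ) := by
    push_cast [Nat.cast_sub hjk]
    ring
  rw [harg, Int.toNat_natCast]
end

section
/- For positive integers n, k with 0 ≤ k ≤ n, the polynomial f_{n,k}(t) := ∑_{j=0}^{k} (-1)^j C(k,j) ∏_{i=0}^{n-1} (it + n - j - i) has nonnegative coefficients. More precisely, f_{n,k}(t) = ∑_{w ∈ W_{n,k}} t^{unlucky(w)}, where W_{n,k} is the set of words w ∈ [n]^n containing each of 1,…,k at least once, and unlucky(w) is the number of unlucky cars under the following parking protocol: cars C_1,…,C_n park in order; car C_i parks in its preferred space w_i if that space is still free, and otherwise parks in the largest free space; a car is unlucky if it does not park in its preferred space. -/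
open Finset Polynomial

/-- One step of the parking protocol on spaces `1,…,n`: the state is the pair
(set of occupied spaces, number of unlucky cars so far) and `p` is the preferred
space of the next car.  The car parks at `p` if `p ∈ {1,…,n}` is free, and
otherwise parks at the largest free space (and is unlucky). -/
def parkStep (n : ℕ) (s : Finset ℕ × ℕ) (p : ℕ) : Finset ℕ × ℕ :=
  if p ∈ Finset.Icc 1 n ∧ p ∉ s.1 then (insert p s.1, s.2)
  else (insert (WithBot.unbotD 0 ((Finset.Icc 1 n) \ s.1).max) s.1, s.2 + 1)

/-- The number of unlucky cars when the cars park (in order) with the list `l`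
of preferences, on the street with spaces `1,…,n`. -/
def unlucky (n : ℕ) (l : List ℕ) : ℕ := (l.foldl (parkStep n) (∅, 0)).2

/-!
Follow the cars one at a time. If `O` is the set of occupied spaces, the values among `1,…,k`
that have not been preferred yet are exactly the free spaces in `[1,k]`. Let `y` be their number
and `r` the number of cars still to come. The next car prefers one of these `y` spaces (it is
lucky and `y` drops by one), or an occupied space (`n - r - 1` choices, unlucky), or another free
space (`r + 1 - y` choices, lucky). An unlucky car takes the largest free space, which lies above
`k` as long as `y < r + 1`, so it leaves `y` unchanged; and if `y > r` the remaining cars cannot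
cover the missing values. So the generating polynomial depends only on `(r, y)` and obeys
`ψ(r+1, y) = y ψ(r, y-1) + ((n-r-1) t + r+1-y) ψ(r, y)`, a recursion that the alternating sum
`∑_j (-1)^j C(y,j) ∏_{n-r ≤ i < n} (i t + n - j - i)` also satisfies because
`(y - j) C(y,j) = y C(y-1,j)`.
-/
def prefs {r n : ℕ} (f : Fin r → Fin n) : List ℕ := List.ofFn fun i => (f i : ℕ) + 1

def unluckyFrom (n : ℕ) (O : Finset ℕ) (l : List ℕ) : ℕ := (l.foldl (parkStep n) (O, 0)).2

section Parking

variable {n : ℕ}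

lemma parkStep_snd_add (O : Finset ℕ) (u p : ℕ) :
    parkStep n (O, u) p = ((parkStep n (O, 0) p).1, u + (parkStep n (O, 0) p).2) := by
  unfold parkStep
  split_ifs <;> simp

lemma foldl_parkStep_snd (l : List ℕ) (O : Finset ℕ) (u : ℕ) :
    (l.foldl (parkStep n) (O, u)).2 = u + unluckyFrom n O l := by
  induction l generalizing O u with
  | nil => rfl
  | cons q l ih =>
    rw [unluckyFrom, List.foldl_cons, List.foldl_cons, parkStep_snd_add O u,
      parkStep_snd_add O 0, ih, ih, Nat.add_assoc]

lemma unluckyFrom_cons_of_mem_sdiff {O : Finset ℕ} {p : ℕ} (hp : p ∈ Icc 1 n \ O) (l : List ℕ) :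
    unluckyFrom n O (p :: l) = unluckyFrom n (insert p O) l := by
  rw [unluckyFrom, List.foldl_cons, parkStep, if_pos (mem_sdiff.1 hp)]
  rfl

lemma unluckyFrom_cons_of_mem {O : Finset ℕ} {p : ℕ} (hp : p ∈ O) (hfree : (Icc 1 n \ O).Nonempty) (l : List ℕ) :
    unluckyFrom n O (p :: l) = unluckyFrom n (insert ((Icc 1 n \ O).max' hfree) O) l + 1 := by
  rw [unluckyFrom, List.foldl_cons, parkStep, if_neg (fun h => h.2 hp), ← coe_max' hfree,
    WithBot.unbotD_coe, foldl_parkStep_snd, Nat.add_comm]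

end Parking

section Words

variable {r n : ℕ}

lemma prefs_cons (a : Fin n) (g : Fin r → Fin n) :
    prefs (Fin.cons a g : Fin (r + 1) → Fin n) = ((a : ℕ) + 1) :: prefs g := by
  simp [prefs, List.ofFn_succ]

lemma card_toFinset_prefs_le (f : Fin r → Fin n) : (prefs f).toFinset.card ≤ r :=
  (List.toFinset_card_le _).trans (List.length_ofFn).le

lemma filter_subset_toFinset_prefs_eq_empty {M : Finset ℕ} (hM : r < M.card) :
    univ.filter (fun f : Fin r → Fin n => M ⊆ (prefs f).toFinset) = ∅ :=
  filter_false_of_mem fun f _ hf =>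
    (card_le_card hf).not_gt (hM.trans_le' (card_toFinset_prefs_le f))

lemma sum_prefs_succ {M : Type*} [AddCommMonoid M] (F : List ℕ → M) :
    ∑ f : Fin (r + 1) → Fin n, F (prefs f) =
      ∑ p ∈ Icc 1 n, ∑ g : Fin r → Fin n, F (p :: prefs g) := by
  rw [← (Fin.consEquiv fun _ => Fin n).sum_comp, Fintype.sum_prod_type]
  change ∑ a, ∑ g, F (prefs (Fin.cons a g : Fin (r + 1) → Fin n)) = _
  simp_rw [prefs_cons]
  rw [Fin.sum_univ_eq_sum_range (fun a => ∑ g : Fin r → Fin n, F ((a + 1) :: prefs g)),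
    range_eq_Ico, sum_Ico_add' (fun p => ∑ g : Fin r → Fin n, F (p :: prefs g)),
    Ico_add_one_right_eq_Icc]

lemma forall_lt_exists_iff_Icc_subset {k : ℕ} (hk : k ≤ n) (w : Fin r → Fin n) :
    (∀ j : Fin n, (j : ℕ) < k → ∃ i, w i = j) ↔ Icc 1 k ⊆ (prefs w).toFinset := by
  simp only [subset_iff, mem_Icc, prefs, List.mem_toFinset, List.mem_ofFn]
  constructor
  · intro h s hs
    obtain ⟨i, hi⟩ := h ⟨s - 1, by omega⟩ (by simp only; omega)
    exact ⟨i, by rw [hi]; simp only; omega⟩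
  · intro h j hj
    obtain ⟨i, hi⟩ := h (x := (j : ℕ) + 1) ⟨by omega, by omega⟩
    exact ⟨i, Fin.ext (by omega)⟩

end Words

noncomputable def unluckyPoly (n : ℕ) : ℕ → ℕ → ℤ[X]
  | 0, y => if y = 0 then 1 else 0
  | r + 1, y =>
    (y : ℤ[X]) * unluckyPoly n r (y - 1) +
      (((n - (r + 1) : ℕ) : ℤ[X]) * X + ((r + 1 - y : ℕ) : ℤ[X])) * unluckyPoly n r y

lemma unluckyPoly_eq_zero_of_lt {n r y : ℕ} (h : r < y) : unluckyPoly n r y = 0 := by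
  induction r generalizing y with
  | zero => simp [unluckyPoly, h.ne']
  | succ r ih =>
    rw [unluckyPoly, ih (y := y - 1) (by omega), ih (by omega), mul_zero, mul_zero, add_zero]

lemma sum_range_choose_mul_sub_mul {R : Type*} [CommRing R] (m : ℕ) (Q : ℕ → R) :
    ∑ j ∈ range (m + 2), (-1) ^ j * ((m + 1).choose j : R) * (((m + 1 : ℕ) - j : R) * Q j) =
      (m + 1 : ℕ) * ∑ j ∈ range (m + 1), (-1) ^ j * (m.choose j : R) * Q j := by
  rw [sum_range_succ, sub_self, zero_mul, mul_zero, add_zero, mul_sum]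
  refine sum_congr rfl fun j hj => ?_
  have h := Nat.choose_mul_succ_eq m j
  rw [← Nat.cast_sub (mem_range.1 hj).le]
  calc (-1) ^ j * ((m + 1).choose j : R) * (((m + 1 - j : ℕ) : R) * Q j)
      = (-1) ^ j * (((m + 1).choose j * (m + 1 - j) : ℕ) : R) * Q j := by push_cast; ring
    _ = ((m + 1 : ℕ) : R) * ((-1) ^ j * (m.choose j : R) * Q j) := by rw [← h]; push_cast; ring

lemma unluckyPoly_eq_sum {n r : ℕ} (hr : r ≤ n) (y : ℕ) :
    unluckyPoly n r y = ∑ j ∈ range (y + 1), (-1) ^ j * (y.choose j : ℤ[X]) *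
      ∏ i ∈ Ico (n - r) n, ((i : ℤ[X]) * X + ((n : ℤ[X]) - (j : ℤ[X]) - (i : ℤ[X]))) := by
  induction r generalizing y with
  | zero =>
    have h := congrArg (C : ℤ → ℤ[X]) (Int.alternating_sum_range_choose (n := y))
    simp only [map_sum, map_mul, map_pow, map_neg, map_one, map_natCast] at h
    simp only [unluckyPoly, Nat.sub_zero, Ico_self, prod_empty, mul_one, h]
    split_ifs <;> simp
  | succ r ih =>
    set Q : ℕ → ℤ[X] := fun j =>
      ∏ i ∈ Ico (n - r) n, ((i : ℤ[X]) * X + ((n : ℤ[X]) - (j : ℤ[X]) - (i : ℤ[X])))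
    have hcast : ((n - (r + 1) : ℕ) : ℤ[X]) = n - (r + 1) := by
      rw [Nat.cast_sub hr]
      push_cast
      ring
    have hprod : ∀ j : ℕ,
        ∏ i ∈ Ico (n - (r + 1)) n, ((i : ℤ[X]) * X + ((n : ℤ[X]) - (j : ℤ[X]) - (i : ℤ[X]))) =
          ((((n - (r + 1) : ℕ) : ℤ[X]) * X + ((r : ℤ[X]) + 1 - (y : ℤ[X]))) +
            ((y : ℤ[X]) - (j : ℤ[X]))) * Q j := by
      intro j
      rw [prod_eq_prod_Ico_succ_bot (by omega), show n - (r + 1) + 1 = n - r by omega, hcast]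
      ring
    have hA : (((n - (r + 1) : ℕ) : ℤ[X]) * X + ((r + 1 - y : ℕ) : ℤ[X])) * unluckyPoly n r y =
        (((n - (r + 1) : ℕ) : ℤ[X]) * X + ((r : ℤ[X]) + 1 - (y : ℤ[X]))) * unluckyPoly n r y := by
      by_cases hy : y ≤ r + 1
      · push_cast [Nat.cast_sub hy]
        rfl
      · rw [unluckyPoly_eq_zero_of_lt (by omega), mul_zero, mul_zero]
    have hB : (y : ℤ[X]) * unluckyPoly n r (y - 1) =
        ∑ j ∈ range (y + 1),
          (-1) ^ j * (y.choose j : ℤ[X]) * (((y : ℤ[X]) - (j : ℤ[X])) * Q j) := by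
      rcases y with _ | m
      · simp
      · rw [sum_range_choose_mul_sub_mul m Q, Nat.add_sub_cancel, ih (by omega)]
    rw [unluckyPoly, hA, hB, ih (by omega), mul_sum, ← sum_add_distrib]
    refine sum_congr rfl fun j _ => ?_
    rw [hprod]
    ring

section WordPoly

variable (n k : ℕ)

noncomputable def wordPoly (O : Finset ℕ) (r : ℕ) : ℤ[X] :=
  ∑ f : Fin r → Fin n with Icc 1 k \ O ⊆ (prefs f).toFinset, X ^ unluckyFrom n O (prefs f)

variable {n k}

lemma wordPoly_succ (O : Finset ℕ) (r : ℕ) :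
    wordPoly n k O (r + 1) =
      ∑ p ∈ Icc 1 n, ∑ g : Fin r → Fin n with Icc 1 k \ O ⊆ insert p (prefs g).toFinset,
        (X : ℤ[X]) ^ unluckyFrom n O (p :: prefs g) := by
  rw [wordPoly, sum_filter, sum_prefs_succ fun l =>
    if Icc 1 k \ O ⊆ l.toFinset then (X : ℤ[X]) ^ unluckyFrom n O l else 0]
  simp only [sum_filter, List.toFinset_cons]

lemma sum_cons_of_mem_sdiff {O : Finset ℕ} {p : ℕ} (hp : p ∈ Icc 1 n \ O) (r : ℕ) :
    ∑ g : Fin r → Fin n with Icc 1 k \ O ⊆ insert p (prefs g).toFinset,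
      (X : ℤ[X]) ^ unluckyFrom n O (p :: prefs g) = wordPoly n k (insert p O) r := by
  simp only [wordPoly, subset_insert_iff, sdiff_insert, unluckyFrom_cons_of_mem_sdiff hp]

lemma sum_cons_of_mem {O : Finset ℕ} {p : ℕ} (hp : p ∈ O) (r : ℕ) :
    ∑ g : Fin r → Fin n with Icc 1 k \ O ⊆ insert p (prefs g).toFinset,
      (X : ℤ[X]) ^ unluckyFrom n O (p :: prefs g) =
    ∑ g : Fin r → Fin n with Icc 1 k \ O ⊆ (prefs g).toFinset,
      X ^ unluckyFrom n O (p :: prefs g) := by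
  simp only [subset_insert_iff_of_notMem fun h => (mem_sdiff.1 h).2 hp]

lemma max'_sdiff_notMem_Icc {O : Finset ℕ} (hfree : (Icc 1 n \ O).Nonempty)
    (h : (Icc 1 k \ O).card < (Icc 1 n \ O).card) : (Icc 1 n \ O).max' hfree ∉ Icc 1 k := by
  intro hmax
  refine h.not_ge (card_le_card fun s hs => ?_)
  have hs_le := le_max' _ s hs
  rw [mem_sdiff, mem_Icc] at hs ⊢
  rw [mem_Icc] at hmax
  exact ⟨⟨hs.1.1, hs_le.trans hmax.2⟩, hs.2⟩

lemma card_Icc_sdiff_of_subset {O : Finset ℕ} {m : ℕ} (hO : O ⊆ Icc 1 n)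
    (hcard : O.card + m = n) :
    (Icc 1 n \ O).card = m := by
  rw [card_sdiff_of_subset hO, Nat.card_Icc]
  omega

section Step

variable {O : Finset ℕ} {r : ℕ}

lemma sum_free_eq (hk : k ≤ n) (hO : O ⊆ Icc 1 n) (hcard : O.card + (r + 1) = n)
    (ih : ∀ {O' : Finset ℕ}, O' ⊆ Icc 1 n → O'.card + r = n →
      wordPoly n k O' r = unluckyPoly n r (Icc 1 k \ O').card) :
    ∑ p ∈ Icc 1 n \ O, ∑ g : Fin r → Fin n with Icc 1 k \ O ⊆ insert p (prefs g).toFinset,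
      (X : ℤ[X]) ^ unluckyFrom n O (p :: prefs g) =
    ((Icc 1 k \ O).card : ℤ[X]) * unluckyPoly n r ((Icc 1 k \ O).card - 1) +
      ((r + 1 - (Icc 1 k \ O).card : ℕ) : ℤ[X]) * unluckyPoly n r (Icc 1 k \ O).card := by
  have hstep : ∀ p ∈ Icc 1 n \ O,
      ∑ g : Fin r → Fin n with Icc 1 k \ O ⊆ insert p (prefs g).toFinset,
        (X : ℤ[X]) ^ unluckyFrom n O (p :: prefs g) =
      if p ∈ Icc 1 k \ O then unluckyPoly n r ((Icc 1 k \ O).card - 1)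
      else unluckyPoly n r (Icc 1 k \ O).card := by
    intro p hp
    have hpO := mem_sdiff.1 hp
    rw [sum_cons_of_mem_sdiff hp, ih (insert_subset hpO.1 hO)
      (by rw [card_insert_of_notMem hpO.2]; omega), sdiff_insert, card_erase_eq_ite]
    split_ifs <;> rfl
  have hsub : Icc 1 k \ O ⊆ Icc 1 n \ O := sdiff_subset_sdiff (Icc_subset_Icc_right hk) le_rfl
  rw [sum_congr rfl hstep, sum_ite, sum_const, sum_const, filter_mem_eq_inter,
    inter_eq_right.2 hsub, filter_not, filter_mem_eq_inter, inter_eq_right.2 hsub,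
    card_sdiff_of_subset hsub, card_Icc_sdiff_of_subset hO hcard, nsmul_eq_mul, nsmul_eq_mul]

lemma sum_occupied_eq (hO : O ⊆ Icc 1 n) (hcard : O.card + (r + 1) = n)
    (ih : ∀ {O' : Finset ℕ}, O' ⊆ Icc 1 n → O'.card + r = n →
      wordPoly n k O' r = unluckyPoly n r (Icc 1 k \ O').card)
    (hy : (Icc 1 k \ O).card ≤ r + 1) :
    ∑ p ∈ O, ∑ g : Fin r → Fin n with Icc 1 k \ O ⊆ insert p (prefs g).toFinset,
      (X : ℤ[X]) ^ unluckyFrom n O (p :: prefs g) =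
    (O.card : ℤ[X]) * (X * unluckyPoly n r (Icc 1 k \ O).card) := by
  rw [← nsmul_eq_mul, ← sum_const]
  refine sum_congr rfl fun p hp => ?_
  rw [sum_cons_of_mem hp]
  rcases hy.lt_or_eq with hlt | heq
  · have hfree_card := card_Icc_sdiff_of_subset hO hcard
    have hfree : (Icc 1 n \ O).Nonempty := by rw [← card_pos]; omega
    set g := (Icc 1 n \ O).max' hfree
    have hgk : g ∉ Icc 1 k := max'_sdiff_notMem_Icc hfree (by omega)
    have hgO := mem_sdiff.1 (max'_mem _ hfree)
    have hsame : Icc 1 k \ insert g O = Icc 1 k \ O := by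
      rw [sdiff_insert, erase_eq_of_notMem fun h => hgk (mem_sdiff.1 h).1]
    simp_rw [unluckyFrom_cons_of_mem hp hfree, pow_succ', ← mul_sum]
    rw [← hsame, ← wordPoly, ih (insert_subset hgO.1 hO)
      (by rw [card_insert_of_notMem hgO.2]; omega)]
  · rw [filter_subset_toFinset_prefs_eq_empty (by omega), sum_empty, heq,
      unluckyPoly_eq_zero_of_lt (Nat.lt_succ_self r), mul_zero]

end Step

lemma wordPoly_eq_unluckyPoly (hk : k ≤ n) {r : ℕ} {O : Finset ℕ} (hO : O ⊆ Icc 1 n)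
    (hcard : O.card + r = n) : wordPoly n k O r = unluckyPoly n r (Icc 1 k \ O).card := by
  induction r generalizing O with
  | zero =>
    have hO_eq : O = Icc 1 n := eq_of_subset_of_card_le hO (by simp; omega)
    have hdone : Icc 1 k \ O = ∅ := by
      rw [hO_eq, sdiff_eq_empty_iff_subset]
      exact Icc_subset_Icc_right hk
    simp [wordPoly, unluckyPoly, hdone, unluckyFrom, prefs]
  | succ r ih =>
    by_cases hy : r + 1 < (Icc 1 k \ O).card
    · rw [unluckyPoly_eq_zero_of_lt hy, wordPoly, filter_subset_toFinset_prefs_eq_empty hy,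
        sum_empty]
    · rw [wordPoly_succ, ← sum_sdiff hO, sum_free_eq hk hO hcard ih,
        sum_occupied_eq hO hcard ih (not_lt.1 hy), unluckyPoly,
        show O.card = n - (r + 1) by omega]
      ring

lemma coeff_wordPoly_nonneg (O : Finset ℕ) (r i : ℕ) : 0 ≤ (wordPoly n k O r).coeff i := by
  rw [wordPoly, finsetSum_coeff]
  exact sum_nonneg fun f _ => by rw [coeff_X_pow]; split_ifs <;> norm_num

lemma wordPoly_empty (hk : k ≤ n) :
    wordPoly n k ∅ n = ∑ w ∈ Finset.univ.filter
        (fun w : Fin n → Fin n => ∀ j : Fin n, (j : ℕ) < k → ∃ i, w i = j),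
      X ^ unlucky n (List.ofFn fun i => (w i : ℕ) + 1) := by
  simp only [wordPoly, sdiff_empty, ← forall_lt_exists_iff_Icc_subset hk]
  rfl

end WordPoly

lemma unluckyPoly_self (n k : ℕ) :
    unluckyPoly n n k = ∑ j ∈ Finset.range (k + 1), (-1) ^ j * C ((k.choose j : ℤ)) *
      ∏ i ∈ Finset.range n, (C ((i : ℤ)) * X + C ((n : ℤ) - j - i)) := by
  simp only [unluckyPoly_eq_sum le_rfl, Nat.sub_self, ← range_eq_Ico, map_sub, map_natCast]

theorem stmt_8_general (n k : ℕ) (hk : k ≤ n) :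
    (∑ j ∈ Finset.range (k + 1),
        (-1) ^ j * C ((k.choose j : ℤ)) *
          ∏ i ∈ Finset.range n, (C ((i : ℤ)) * X + C ((n : ℤ) - j - i)) : ℤ[X]) =
      (∑ w ∈ Finset.univ.filter
          (fun w : Fin n → Fin n => ∀ j : Fin n, (j : ℕ) < k → ∃ i, w i = j),
        X ^ unlucky n (List.ofFn fun i => (w i : ℕ) + 1)) ∧
    ∀ i : ℕ, 0 ≤ (∑ j ∈ Finset.range (k + 1),
        (-1) ^ j * C ((k.choose j : ℤ)) *
          ∏ i ∈ Finset.range n, (C ((i : ℤ)) * X + C ((n : ℤ) - j - i)) : ℤ[X]).coeff i := by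
  rw [← unluckyPoly_self, ← wordPoly_empty hk]
  have hkey : unluckyPoly n n k = wordPoly n k ∅ n := by
    rw [wordPoly_eq_unluckyPoly hk (empty_subset _) (by simp), sdiff_empty, Nat.card_Icc,
      Nat.add_sub_cancel]
  exact ⟨hkey, fun i => hkey ▸ coeff_wordPoly_nonneg ∅ n i⟩

theorem stmt_8 (n k : ℕ) (hn : 0 < n) (hk : k ≤ n) :
    (∑ j ∈ Finset.range (k + 1),
        (-1) ^ j * C ((k.choose j : ℤ)) *
          ∏ i ∈ Finset.range n, (C ((i : ℤ)) * X + C ((n : ℤ) - j - i)) : ℤ[X]) =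
      (∑ w ∈ Finset.univ.filter
          (fun w : Fin n → Fin n => ∀ j : Fin n, (j : ℕ) < k → ∃ i, w i = j),
        X ^ unlucky n (List.ofFn fun i => (w i : ℕ) + 1)) ∧
    ∀ i : ℕ, 0 ≤ (∑ j ∈ Finset.range (k + 1),
        (-1) ^ j * C ((k.choose j : ℤ)) *
          ∏ i ∈ Finset.range n, (C ((i : ℤ)) * X + C ((n : ℤ) - j - i)) : ℤ[X]).coeff i :=
  stmt_8_general n k hk
end

section
/- For positive integers n, k with 0 ≤ k ≤ n, the polynomial ∑_{j=0}^{k} (-1)^j C(k,j) ∏_{i=0}^{n-1} (it + n - j) equals ∑_{φ ∈ F_{n,k}} t^{exc(φ)}, where F_{n,k} is the set of functions φ : [n] → [2n-1] with φ(i) ≤ n + i − 1 for all i ∈ [n] whose image contains each of 1,…,k, and exc(φ) = #{i ∈ [n] : φ(i) > n}. -/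
/-!
Inclusion–exclusion over the set `S ⊆ [k]` of values that `φ` is forced to omit. For a fixed `S`
with `|S| = j`, the admissible values of `φ(i)` are `[n + i] \ S`: the `n - j` of them at most `n`
contribute `1` and the `i` of them above `n` contribute `t`, so the excedance generating function
of the maps omitting `S` factors as `∏ᵢ (i t + n - j)`. Summing with signs `(-1)^|S|` keeps exactly
the maps whose image covers `[k]`.
-/

open Finset Polynomial

theorem Finset.sum_powerset_disjoint_neg_one_pow_card {α R : Type*} [CommRing R] [DecidableEq α]
    (T U : Finset α) :
    ∑ S ∈ T.powerset with Disjoint S U, (-1 : R) ^ #S = if T ⊆ U then 1 else 0 := by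
  have hfilter : T.powerset.filter (Disjoint · U) = (T \ U).powerset := by
    ext S; simp [subset_sdiff]
  have h := congrArg (Int.cast : ℤ → R) (sum_powerset_neg_one_pow_card (x := T \ U))
  push_cast [sdiff_eq_empty_iff_subset] at h
  rw [hfilter, h]

theorem Finset.sum_powerset_neg_one_pow_mul_sum_filter_disjoint {ι α R : Type*} [CommRing R]
    [DecidableEq α] (T : Finset α) (F : Finset ι) (im : ι → Finset α) (w : ι → R) :
    ∑ S ∈ T.powerset, (-1 : R) ^ #S * ∑ φ ∈ F with Disjoint S (im φ), w φ =
      ∑ φ ∈ F with T ⊆ im φ, w φ := by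
  simp_rw [sum_filter, mul_sum]
  rw [sum_comm]
  refine sum_congr rfl fun φ _ => ?_
  simp_rw [mul_ite, mul_zero, ← sum_filter, ← sum_mul, sum_powerset_disjoint_neg_one_pow_card,
    ite_mul, one_mul, zero_mul]

theorem sum_Icc_sdiff_ite_lt {R : Type*} [CommRing R] (a b : ℕ) (x : R) {S : Finset ℕ}
    (hS : S ⊆ Icc 1 a) :
    ∑ m ∈ Icc 1 (a + b) \ S, (if a < m then x else 1) = b * x + (a - #S) := by
  have hhigh : (Icc 1 (a + b) \ S).filter (a < ·) = Ioc a (a + b) := by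
    ext m
    have hSm := @hS m
    simp only [mem_filter, mem_sdiff, mem_Icc, mem_Ioc] at hSm ⊢
    constructor
    · rintro ⟨⟨⟨-, hmb⟩, -⟩, ham⟩
      exact ⟨ham, hmb⟩
    · rintro ⟨ham, hmb⟩
      exact ⟨⟨⟨by omega, hmb⟩, fun hmS => by have := hSm hmS; omega⟩, ham⟩
  have hlow : (Icc 1 (a + b) \ S).filter (¬ a < ·) = Icc 1 a \ S := by
    ext m
    simp only [mem_filter, mem_sdiff, mem_Icc]
    constructor
    · rintro ⟨⟨⟨h1, -⟩, hmS⟩, ham⟩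
      exact ⟨⟨h1, by omega⟩, hmS⟩
    · rintro ⟨⟨h1, hma⟩, hmS⟩
      exact ⟨⟨⟨h1, by omega⟩, hmS⟩, by omega⟩
  rw [sum_ite, hhigh, hlow, sum_const, sum_const, card_sdiff_of_subset hS, Nat.card_Ioc,
    Nat.card_Icc, Nat.add_sub_cancel_left, Nat.add_sub_cancel]
  have hSa : #S ≤ a := by simpa using card_le_card hS
  simp [Nat.cast_sub hSa]

theorem sum_X_pow_excedances_of_disjoint {n : ℕ} {S : Finset ℕ} (hS : S ⊆ Icc 1 n) :
    ∑ φ ∈ (univ.filter fun φ : Fin n → Fin (2 * n - 1) => ∀ i : Fin n, (φ i : ℕ) + 1 ≤ n + i)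
        with Disjoint S (univ.image fun i => (φ i : ℕ) + 1),
      (X : ℤ[X]) ^ #(univ.filter fun i => n < (φ i : ℕ) + 1) =
    ∏ i ∈ range n, (C (i : ℤ) * X + C ((n : ℤ) - #S)) := by
  set A : Fin n → Finset (Fin (2 * n - 1)) :=
    fun i => univ.filter fun v => (v : ℕ) + 1 ≤ n + i ∧ (v : ℕ) + 1 ∉ S
  have hmaps :
      {φ ∈ univ.filter fun φ : Fin n → Fin (2 * n - 1) => ∀ i : Fin n, (φ i : ℕ) + 1 ≤ n + i |
        Disjoint S (univ.image fun i => (φ i : ℕ) + 1)} = Fintype.piFinset A := by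
    ext φ
    simp [A, Fintype.mem_piFinset, disjoint_right, forall_and]
  have hcoord (i : Fin n) :
      ∑ v ∈ A i, (if n < (v : ℕ) + 1 then (X : ℤ[X]) else 1) =
        C (i : ℤ) * X + C ((n : ℤ) - #S) := by
    have hshift : ∑ v ∈ A i, (if n < (v : ℕ) + 1 then (X : ℤ[X]) else 1) =
        ∑ m ∈ Icc 1 (n + i) \ S, (if n < m then (X : ℤ[X]) else 1) := by
      refine sum_nbij (fun v => (v : ℕ) + 1) ?_ ?_ ?_ fun _ _ => rfl
      · intro v hv
        simp only [A, mem_filter, mem_univ, true_and] at hv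
        simp [hv.2, hv.1]
      · intro v _ w _ h
        exact Fin.ext (by simpa using h)
      · intro m hm
        simp only [coe_sdiff, coe_Icc, Set.mem_sdiff, Set.mem_Icc, mem_coe] at hm
        refine ⟨⟨m - 1, by omega⟩, ?_, by simp; omega⟩
        simp only [A, coe_filter, mem_univ, true_and, Set.mem_ofPred_eq]
        exact ⟨by omega, by rw [Nat.sub_add_cancel hm.1.1]; exact hm.2⟩
    rw [hshift, sum_Icc_sdiff_ite_lt n i X hS]
    simp
  have hweight (φ : Fin n → Fin (2 * n - 1)) :
      (X : ℤ[X]) ^ #(univ.filter fun i => n < (φ i : ℕ) + 1) =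
        ∏ i, if n < (φ i : ℕ) + 1 then X else 1 := by
    rw [← prod_filter, prod_const]
  rw [hmaps, sum_congr rfl fun φ _ => hweight φ,
    ← prod_univ_sum A fun _ v => if n < (v : ℕ) + 1 then (X : ℤ[X]) else 1,
    ← Fin.prod_univ_eq_prod_range]
  exact prod_congr rfl fun i _ => hcoord i

theorem stmt_9_general (n k : ℕ) (hk : k ≤ n) :
    (∑ j ∈ Finset.range (k + 1),
        (-1) ^ j * C ((k.choose j : ℤ)) *
          ∏ i ∈ Finset.range n, (C ((i : ℤ)) * X + C ((n : ℤ) - j)) : ℤ[X]) =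
      ∑ φ ∈ Finset.univ.filter
          (fun φ : Fin n → Fin (2 * n - 1) =>
            (∀ i : Fin n, (φ i : ℕ) + 1 ≤ n + (i : ℕ)) ∧
            ∀ m : ℕ, 1 ≤ m → m ≤ k → ∃ i, (φ i : ℕ) + 1 = m),
        X ^ (Finset.univ.filter (fun i : Fin n => n < (φ i : ℕ) + 1)).card := by
  calc _ = ∑ S ∈ (Icc 1 k).powerset,
        (-1 : ℤ[X]) ^ #S * ∏ i ∈ range n, (C (i : ℤ) * X + C ((n : ℤ) - #S)) := by
        rw [sum_powerset_apply_card
          fun j => (-1 : ℤ[X]) ^ j * ∏ i ∈ range n, (C (i : ℤ) * X + C ((n : ℤ) - j)),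
          Nat.card_Icc, Nat.add_sub_cancel]
        refine sum_congr rfl fun j _ => ?_
        rw [nsmul_eq_mul, ← map_natCast C]
        ring
    _ = ∑ S ∈ (Icc 1 k).powerset, (-1 : ℤ[X]) ^ #S *
          ∑ φ ∈ (univ.filter fun φ : Fin n → Fin (2 * n - 1) => ∀ i : Fin n, (φ i : ℕ) + 1 ≤ n + i)
            with Disjoint S (univ.image fun i => (φ i : ℕ) + 1),
          (X : ℤ[X]) ^ #(univ.filter fun i => n < (φ i : ℕ) + 1) := by
        refine sum_congr rfl fun S hS => ?_
        rw [sum_X_pow_excedances_of_disjoint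
          ((mem_powerset.1 hS).trans (Icc_subset_Icc_right hk))]
    _ = _ := by
        rw [sum_powerset_neg_one_pow_mul_sum_filter_disjoint, filter_filter]
        refine sum_congr (filter_congr fun φ _ => ?_) fun _ _ => rfl
        simp [subset_iff, and_imp]

theorem stmt_9 (n k : ℕ) (hn : 0 < n) (hk : k ≤ n) :
    (∑ j ∈ Finset.range (k + 1),
        (-1) ^ j * C ((k.choose j : ℤ)) *
          ∏ i ∈ Finset.range n, (C ((i : ℤ)) * X + C ((n : ℤ) - j)) : ℤ[X]) =
      ∑ φ ∈ Finset.univ.filter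
          (fun φ : Fin n → Fin (2 * n - 1) =>
            (∀ i : Fin n, (φ i : ℕ) + 1 ≤ n + (i : ℕ)) ∧
            ∀ m : ℕ, 1 ≤ m → m ≤ k → ∃ i, (φ i : ℕ) + 1 = m),
        X ^ (Finset.univ.filter (fun i : Fin n => n < (φ i : ℕ) + 1)).card :=
  stmt_9_general n k hk
end

section
/- For positive integers n, k with 0 ≤ k ≤ n and every natural number m, ∑_{j=0}^{k} (-1)^j C(k,j) C((n-j)(m+1), n) = ∑ over weak compositions (a_1,…,a_n) of n with a_1,…,a_k ≥ 1 of ∏_{i=1}^{n} C(m+1, a_i). -/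
/-! With `P = (1 + X) ^ (m + 1)`, both sides are the coefficient of `X ^ n` in
`(P - 1) ^ k * P ^ (n - k)`: the left side by the binomial expansion of the first factor, the right
side by expanding it as a product of `n` factors, the first `k` of which, `P - 1`, have no
constant term. -/

open Finset PowerSeries

theorem sub_one_pow_mul_pow {R : Type*} [CommRing R] (x : R) (k r : ℕ) :
    (x - 1) ^ k * x ^ r = ∑ j ∈ range (k + 1), (-1) ^ j * k.choose j * x ^ (k - j + r) := by
  rw [show x - 1 = -1 + x by ring, add_pow, sum_mul]
  refine sum_congr rfl fun j _ => ?_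
  rw [pow_add]
  ring

namespace PowerSeries

variable {R : Type*}

theorem coeff_one_add_X_pow [Semiring R] (N d : ℕ) :
    coeff d ((1 + X : R⟦X⟧) ^ N) = N.choose d := by
  rw [← Polynomial.coe_X, ← Polynomial.coe_one, ← Polynomial.coe_add, ← Polynomial.coe_pow,
    Polynomial.coeff_coe, Polynomial.coeff_one_add_X_pow]

theorem coeff_prod_univ_eq_sum_fin [CommSemiring R] {ι : Type*} [Fintype ι] [DecidableEq ι]
    (f : ι → R⟦X⟧) (d : ℕ) :
    coeff d (∏ i, f i) =
      ∑ a ∈ univ.filter (fun a : ι → Fin (d + 1) => ∑ i, (a i : ℕ) = d),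
        ∏ i, coeff (a i) (f i) := by
  rw [coeff_prod]
  symm
  refine sum_bij (fun a _ => Finsupp.equivFunOnFinite.symm fun i => (a i : ℕ))
    (fun a ha => ?_) (fun a _ b _ hab => ?_) (fun l hl => ?_) (fun a _ => rfl)
  · simpa using ha
  · exact funext fun i => Fin.ext (DFunLike.congr_fun hab i)
  · have hsum : ∑ i, l i = d := (mem_finsuppAntidiag.mp hl).1
    have hle (i : ι) : l i ≤ d := hsum ▸ single_le_sum (fun _ _ => Nat.zero_le _) (mem_univ i)
    exact ⟨fun i => ⟨l i, Nat.lt_succ_of_le (hle i)⟩, by simpa using hsum, by ext; simp⟩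

end PowerSeries

theorem stmt_11_general (n k m : ℕ) (hk : k ≤ n) :
    (∑ j ∈ Finset.range (k + 1),
        (-1) ^ j * (k.choose j : ℤ) * (((n - j) * (m + 1)).choose n : ℤ)) =
      ∑ a ∈ Finset.univ.filter
          (fun a : Fin n → Fin (n + 1) =>
            (∑ i, (a i : ℕ)) = n ∧ ∀ i : Fin n, (i : ℕ) < k → 1 ≤ (a i : ℕ)),
        ∏ i, ((m + 1).choose (a i) : ℤ) := by
  set P : ℤ⟦X⟧ := (1 + X) ^ (m + 1)
  have h_prod : (P - 1) ^ k * P ^ (n - k) = ∏ i : Fin n, if (i : ℕ) < k then P - 1 else P := by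
    rw [prod_ite, prod_const, prod_const, Fin.card_filter_val_lt, filter_not,
      card_sdiff_of_subset (filter_subset _ _), Fin.card_filter_val_lt, card_univ,
      Fintype.card_fin, min_eq_right hk]
  have h_coeff (i : Fin n) (d : ℕ) : coeff d (if (i : ℕ) < k then P - 1 else P)
      = if ((i : ℕ) < k → 1 ≤ d) then ((m + 1).choose d : ℤ) else 0 := by
    by_cases hi : (i : ℕ) < k <;> rcases d with _ | d <;> simp [hi, P, coeff_one_add_X_pow]
  calc _ = coeff n ((P - 1) ^ k * P ^ (n - k)) := by
        rw [sub_one_pow_mul_pow, map_sum]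
        refine sum_congr rfl fun j hj => ?_
        have hj : j ≤ k := Nat.lt_succ_iff.mp (mem_range.mp hj)
        rw [← pow_mul, show (m + 1) * (k - j + (n - k)) = (n - j) * (m + 1) by grind,
          show ((-1) ^ j * k.choose j : ℤ⟦X⟧) = C ((-1) ^ j * (k.choose j : ℤ)) by simp,
          coeff_C_mul, coeff_one_add_X_pow]
    _ = ∑ a ∈ univ.filter (fun a : Fin n → Fin (n + 1) => ∑ i, (a i : ℕ) = n),
          ∏ i, coeff (a i) (if (i : ℕ) < k then P - 1 else P) := by
        rw [h_prod, coeff_prod_univ_eq_sum_fin]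
    _ = _ := by
        rw [← filter_filter, sum_filter (fun a : Fin n → Fin (n + 1) => ∀ i : Fin n, _ → _)]
        refine sum_congr rfl fun a _ => ?_
        simp only [h_coeff, Fintype.prod_ite_zero]
        congr -- the two `if`s differ only in their `Decidable` instances

theorem stmt_11 (n k m : ℕ) (hn : 0 < n) (hk : k ≤ n) :
    (∑ j ∈ Finset.range (k + 1),
        (-1) ^ j * (k.choose j : ℤ) * (((n - j) * (m + 1)).choose n : ℤ)) =
      ∑ a ∈ Finset.univ.filter
          (fun a : Fin n → Fin (n + 1) =>
            (∑ i, (a i : ℕ)) = n ∧ ∀ i : Fin n, (i : ℕ) < k → 1 ≤ (a i : ℕ)),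
        ∏ i, ((m + 1).choose (a i) : ℤ) :=
  stmt_11_general n k m hk
end

section
/- For positive integers n, k with 0 ≤ k ≤ n, the following identity of formal power series holds: ∑_{m ≥ 0} (∑_{j=0}^{k} (-1)^j C(k,j) C((n-j)(m+1), n)) t^m = (∑_{w ∈ W_{n,k}} t^{n−1−des(w)}) / (1−t)^{n+1}, where W_{n,k} is the set of words w ∈ [n]^n in which each of 1,…,k appears at least once, and des(w) = #{i ∈ [n−1] : w_i > w_{i+1}}. -/
/-!
Comparing coefficients of `t^m` after dividing by `(1 - t)^(n+1)`, the identity says that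
`∑_{w ∈ W_{n,k}} C(m + 1 + des w, n)` is the alternating sum on the left. For unrestricted words
over an `N`-letter alphabet one has the Worpitzky-type identity
`∑_w C(m + 1 + des w, n) = C(N (m + 1), n)`, proved bijectively by reading an `n`-subset of
`[N (m + 1)]` in base `N`. Inclusion–exclusion over the letters `1, …, k` that a word misses then
gives the alternating sum, since words avoiding `j` given letters are words over `n - j` letters.
-/

open Finset PowerSeries

/-- The number of descents of a word given as a list: indices `i` with `l_i > l_{i+1}`. -/
def des (l : List ℕ) : ℕ := (l.zip l.tail).countP (fun p => p.2 < p.1)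

variable {α β : Type*}

section Descents

variable [LinearOrder α] {n : ℕ}

def descents (w : Fin (n + 1) → α) : Finset (Fin n) := {i | w i.succ < w i.castSucc}

def ascents (w : Fin (n + 1) → α) : Finset (Fin n) := {i | w i.castSucc < w i.succ}

lemma descents_comp_of_strictMono [LinearOrder β] {g : α → β} (hg : StrictMono g)
    (w : Fin (n + 1) → α) : descents (g ∘ w) = descents w := by
  simp [descents, hg.lt_iff_lt]

lemma ascents_rev_comp {N : ℕ} (w : Fin (n + 1) → Fin N) :
    ascents (Fin.rev ∘ w) = descents w := by
  simp [ascents, descents, Fin.rev_lt_rev]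

lemma card_descents_succ (v : Fin (n + 2) → α) :
    #(descents v) = #(descents fun i => v i.succ) + if v 1 < v 0 then 1 else 0 := by
  simp only [descents, card_filter, Fin.sum_univ_succ, Fin.succ_castSucc]
  rw [add_comm]
  rfl

end Descents

lemma des_cons_cons (a b : ℕ) (l : List ℕ) :
    des (a :: b :: l) = des (b :: l) + if b < a then 1 else 0 := by
  simp [des, List.countP_cons]

lemma des_ofFn {n : ℕ} (v : Fin (n + 1) → ℕ) : des (List.ofFn v) = #(descents v) := by
  induction n with
  | zero => simp [des, descents]
  | succ n ih =>
    rw [List.ofFn_succ, List.ofFn_succ, des_cons_cons,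
      ← List.ofFn_succ (f := fun i : Fin (n + 1) => v i.succ), ih, card_descents_succ]
    rfl

section StrictMono

lemma le_val_of_strictMono {n M : ℕ} {y : Fin n → Fin M} (hy : StrictMono y) (i : Fin n) :
    (i : ℕ) ≤ y i :=
  calc (i : ℕ) = #(Iio i) := (Fin.card_Iio i).symm
    _ ≤ #(Iio (y i)) :=
      card_le_card_of_injOn y (fun j hj => by simpa using hy (by simpa using hj)) hy.injective.injOn
    _ = y i := Fin.card_Iio _

lemma val_add_lt_of_strictMono {n M : ℕ} {y : Fin n → Fin M} (hy : StrictMono y) (i : Fin n) :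
    (y i : ℕ) + (n - 1 - i) < M := by
  have h : #(Ioi i) ≤ #(Ioi (y i)) :=
    card_le_card_of_injOn y (fun j hj => by simpa using hy (by simpa using hj)) hy.injective.injOn
  rw [Fin.card_Ioi, Fin.card_Ioi] at h
  omega

lemma card_strictMono_fin [Fintype α] [LinearOrder α] (n : ℕ) :
    Nat.card {f : Fin n → α // StrictMono f} = (Fintype.card α).choose n := by
  rw [← Fintype.card_finset_len, ← Nat.card_eq_fintype_card]
  exact Nat.card_congr
    { toFun f := ⟨univ.image f.1, by simp [card_image_of_injective _ f.2.injective]⟩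
      invFun s := ⟨s.1.orderEmbOfFin s.2, (s.1.orderEmbOfFin s.2).strictMono⟩
      left_inv f := Subtype.ext
        (orderEmbOfFin_unique _ (fun x => mem_image_of_mem _ (mem_univ x)) f.2).symm
      right_inv s := Subtype.ext (image_orderEmbOfFin_univ _ _) }

lemma strictMono_finProdFinEquiv_comp_ofLex (a b : ℕ) :
    StrictMono (finProdFinEquiv ∘ ofLex : Fin a ×ₗ Fin b → Fin (a * b)) := by
  intro x y h
  rw [Prod.Lex.lt_iff, Fin.lt_def, Fin.lt_def] at h
  simp only [Function.comp_apply, Fin.lt_def, finProdFinEquiv_apply_val]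
  rcases h with h | ⟨h, h'⟩
  · have := (ofLex x).2.isLt
    have : b * ((ofLex x).1 + 1) ≤ b * (ofLex y).1 := Nat.mul_le_mul_left b h
    rw [Nat.mul_succ] at this
    omega
  · rw [h]
    omega

end StrictMono

section StrictMonoExcept

variable {n : ℕ}

def StrictMonoExcept [Preorder α] (T : Finset (Fin n)) (q : Fin (n + 1) → α) : Prop :=
  ∀ i, q i.castSucc < q i.succ ∨ q i.castSucc = q i.succ ∧ i ∈ T

def stallsBefore (T : Finset (Fin n)) (i : Fin (n + 1)) : ℕ := #{l ∈ T | l.castSucc < i}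

lemma stallsBefore_succ (T : Finset (Fin n)) (i : Fin n) :
    stallsBefore T i.succ = stallsBefore T i.castSucc + if i ∈ T then 1 else 0 := by
  simp only [stallsBefore, Fin.castSucc_lt_succ_iff, Fin.castSucc_lt_castSucc_iff,
    le_iff_lt_or_eq, filter_or]
  rw [card_union_of_disjoint (disjoint_filter.2 fun l _ h h' => h.ne h'), filter_eq']
  split_ifs <;> simp

lemma stallsBefore_le (T : Finset (Fin n)) (i : Fin (n + 1)) : stallsBefore T i ≤ i :=
  calc stallsBefore T i ≤ #(Iio i) :=
        card_le_card_of_injOn Fin.castSucc (fun l hl => by simpa using (mem_filter.1 hl).2)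
          (Fin.castSucc_injective n).injOn
    _ = i := Fin.card_Iio i

lemma stallsBefore_le_card (T : Finset (Fin n)) (i : Fin (n + 1)) : stallsBefore T i ≤ #T :=
  card_filter_le _ _

lemma card_le_stallsBefore_add (T : Finset (Fin n)) (i : Fin (n + 1)) :
    #T ≤ stallsBefore T i + (n - i) := by
  have h : #{l ∈ T | ¬ l.castSucc < i} ≤ #(Ioi i) :=
    card_le_card_of_injOn Fin.succ
      (fun l hl => by simpa [Fin.lt_def] using (mem_filter.1 hl).2) (Fin.succ_injective n).injOn
  have := card_filter_add_card_filter_not (s := T) (fun l => l.castSucc < i)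
  rw [Fin.card_Ioi] at h
  unfold stallsBefore
  omega

/-- Adding `stallsBefore T` turns the sequences that may stall at `T` into strictly increasing
ones, with the range enlarged by `#T`. -/
lemma card_strictMonoExcept (T : Finset (Fin n)) (m : ℕ) :
    Nat.card {q : Fin (n + 1) → Fin (m + 1) // StrictMonoExcept T q} =
      (m + 1 + #T).choose (n + 1) := by
  rw [← Fintype.card_fin (m + 1 + #T), ← card_strictMono_fin]
  have hs := stallsBefore_le T
  have hsT := stallsBefore_le_card T
  have hT := card_le_stallsBefore_add T
  have hsucc := stallsBefore_succ T
  refine Nat.card_congr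
    { toFun q := ⟨fun i => ⟨q.1 i + stallsBefore T i, by
          have := (q.1 i).isLt; have := hsT i; omega⟩, ?_⟩
      invFun y := ⟨fun i => ⟨y.1 i - stallsBefore T i, ?_⟩, ?_⟩
      left_inv q := ?_
      right_inv y := ?_ }
  · rw [Fin.strictMono_iff_lt_succ]
    intro i
    simp only [Fin.lt_def, hsucc]
    rcases q.2 i with h | ⟨h, hi⟩
    · rw [Fin.lt_def] at h
      split_ifs <;> omega
    · rw [if_pos hi, h]
      omega
  · have := val_add_lt_of_strictMono y.2 i
    have := hT i
    omega
  · intro i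
    have h := y.2 (Fin.castSucc_lt_succ (i := i))
    have h0 := (hs i.castSucc).trans (le_val_of_strictMono y.2 i.castSucc)
    rw [Fin.lt_def] at h
    simp only [Fin.lt_def, Fin.ext_iff, hsucc]
    split_ifs with hi <;> simp only [hi, and_true, and_false, or_false] <;> omega
  · ext i
    simp
  · ext i
    have := (hs i).trans (le_val_of_strictMono y.2 i)
    simp only
    omega

lemma strictMono_toLex_iff [Preorder α] [LinearOrder β] (q : Fin (n + 1) → α)
    (r : Fin (n + 1) → β) :
    StrictMono (fun i => toLex (q i, r i)) ↔ StrictMonoExcept (ascents r) q := by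
  simp [Fin.strictMono_iff_lt_succ, Prod.Lex.toLex_lt_toLex, StrictMonoExcept, ascents]

lemma card_strictMono_lex_eq_card_sigma (n N m : ℕ) :
    Nat.card {x : Fin (n + 1) → Fin (m + 1) ×ₗ Fin N // StrictMono x} =
      Nat.card (Σ r : Fin (n + 1) → Fin N,
        {q : Fin (n + 1) → Fin (m + 1) // StrictMonoExcept (ascents r) q}) :=
  Nat.card_congr
    { toFun x := ⟨fun i => (ofLex (x.1 i)).2, fun i => (ofLex (x.1 i)).1,
        (strictMono_toLex_iff _ _).1 x.2⟩
      invFun p := ⟨fun i => toLex (p.2.1 i, p.1 i), (strictMono_toLex_iff _ _).2 p.2.2⟩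
      left_inv _ := rfl
      right_inv _ := rfl }

end StrictMonoExcept

/-- Writing an `(n+1)`-subset of `Fin (N * (m + 1))` as a strictly increasing sequence
`x i = (N - 1 - w i) + N * q i` splits it into a word `w` and a sequence `q` that may stall only
at the descents of `w`. -/
theorem sum_choose_add_card_descents (n N m : ℕ) :
    ∑ w : Fin (n + 1) → Fin N, (m + 1 + #(descents w)).choose (n + 1) =
      (N * (m + 1)).choose (n + 1) := by
  let e := (strictMono_finProdFinEquiv_comp_ofLex (m + 1) N).orderIsoOfSurjective _
    (finProdFinEquiv.surjective.comp ofLex.surjective)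
  calc ∑ w : Fin (n + 1) → Fin N, (m + 1 + #(descents w)).choose (n + 1)
      = ∑ w : Fin (n + 1) → Fin N,
          Nat.card {q : Fin (n + 1) → Fin (m + 1) // StrictMonoExcept (descents w) q} := by
        simp only [card_strictMonoExcept]
    _ = ∑ r : Fin (n + 1) → Fin N,
          Nat.card {q : Fin (n + 1) → Fin (m + 1) // StrictMonoExcept (ascents r) q} := by
        refine Fintype.sum_equiv ((Equiv.refl _).arrowCongr Fin.revPerm) _ _ fun w => ?_
        rw [← ascents_rev_comp]
        rfl
    _ = Nat.card {x : Fin (n + 1) → Fin (m + 1) ×ₗ Fin N // StrictMono x} := by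
        rw [card_strictMono_lex_eq_card_sigma, Nat.card_sigma]
    _ = Nat.card {x : Fin (n + 1) → Fin ((m + 1) * N) // StrictMono x} :=
        Nat.card_congr <| ((Equiv.refl _).arrowCongr e.toEquiv).subtypeEquiv fun x =>
          ⟨e.strictMono.comp, fun h => by simpa [Function.comp_def] using e.symm.strictMono.comp h⟩
    _ = (N * (m + 1)).choose (n + 1) := by rw [card_strictMono_fin, Fintype.card_fin, mul_comm]

section InclusionExclusion

variable [Fintype β] [LinearOrder β]

theorem sum_choose_add_card_descents_of_forall_mem (n m : ℕ) (s : Finset β) :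
    ∑ w ∈ {w : Fin (n + 1) → β | ∀ i, w i ∈ s}, (m + 1 + #(descents w)).choose (n + 1) =
      (#s * (m + 1)).choose (n + 1) := by
  let e := s.orderIsoOfFin rfl
  rw [← sum_choose_add_card_descents]
  symm
  refine sum_bij' (fun v _ i => (e (v i) : β)) (fun w hw i => e.symm ⟨w i, (mem_filter.1 hw).2 i⟩)
    (fun v _ => by simp) (fun _ _ => mem_univ _) (fun v _ => by simp) (fun w _ => by simp)
    fun v _ => ?_
  rw [← descents_comp_of_strictMono ((OrderEmbedding.subtype _).strictMono.comp e.strictMono)]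
  rfl

lemma Finset.mem_inf_iff {ι γ : Type*} [Fintype γ] [DecidableEq γ] {s : Finset ι}
    {f : ι → Finset γ} {a : γ} : a ∈ s.inf f ↔ ∀ i ∈ s, a ∈ f i := by
  simpa only [← singleton_subset_iff] using Finset.le_inf_iff (a := {a}) (s := s) (f := f)

theorem sum_choose_add_card_descents_of_forall_exists (n m : ℕ) (K : Finset β) :
    ∑ w ∈ {w : Fin (n + 1) → β | ∀ j ∈ K, ∃ i, w i = j},
        ((m + 1 + #(descents w)).choose (n + 1) : ℤ) =
      ∑ j ∈ range (#K + 1),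
        (-1) ^ j * ((#K).choose j : ℤ) * (((Fintype.card β - j) * (m + 1)).choose (n + 1) : ℤ) := by
  have hcover : ({w | ∀ j ∈ K, ∃ i, w i = j} : Finset (Fin (n + 1) → β)) =
      K.inf fun j => ({w | ∀ i, w i ≠ j} : Finset (Fin (n + 1) → β))ᶜ := by
    ext w
    simp only [Finset.mem_inf_iff]
    simp
  have havoid (t : Finset β) : t.inf (fun j => ({w | ∀ i, w i ≠ j} : Finset (Fin (n + 1) → β))) =
      ({w | ∀ i, w i ∈ tᶜ} : Finset (Fin (n + 1) → β)) := by
    ext w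
    simp only [Finset.mem_inf_iff, mem_filter, mem_univ, true_and, mem_compl]
    exact ⟨fun h i hi => h _ hi i rfl, fun h j hj i hi => h i (hi ▸ hj)⟩
  rw [hcover, inclusion_exclusion_sum_inf_compl]
  simp_rw [havoid, ← Nat.cast_sum, sum_choose_add_card_descents_of_forall_mem, card_compl]
  rw [sum_powerset_apply_card
    (fun j => (-1 : ℤ) ^ j • (((Fintype.card β - j) * (m + 1)).choose (n + 1) : ℤ))]
  refine sum_congr rfl fun j _ => ?_
  simp only [smul_eq_mul, nsmul_eq_mul]
  ring

end InclusionExclusion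

lemma coeff_X_pow_sub_mul_invOneSubPow (R : Type*) [CommRing R] {n d : ℕ} (hd : d ≤ n) (m : ℕ) :
    coeff m (X ^ (n - d) * (invOneSubPow R (n + 2)).val) = ((m + 1 + d).choose (n + 1) : R) := by
  rw [invOneSubPow_val_succ_eq_mk_add_choose, mul_comm, coeff_mul_X_pow', coeff_mk]
  split_ifs with h
  · congr 2
    omega
  · rw [Nat.choose_eq_zero_of_lt (by omega), Nat.cast_zero]

theorem stmt_12 (n k : ℕ) (hn : 0 < n) (hk : k ≤ n) :
    (PowerSeries.mk fun m =>
        ∑ j ∈ Finset.range (k + 1),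
          (-1) ^ j * (k.choose j : ℤ) * (((n - j) * (m + 1)).choose n : ℤ)) *
        (1 - PowerSeries.X) ^ (n + 1) =
      ∑ w ∈ Finset.univ.filter
          (fun w : Fin n → Fin n => ∀ j : Fin n, (j : ℕ) < k → ∃ i, w i = j),
        (PowerSeries.X : PowerSeries ℤ) ^ (n - 1 - des (List.ofFn fun i => (w i : ℕ) + 1)) := by
  obtain ⟨n, rfl⟩ := Nat.exists_eq_add_one.2 hn
  have hK : #({j | (j : ℕ) < k} : Finset (Fin (n + 1))) = k := by
    rw [Fin.card_filter_val_lt, min_eq_right hk]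
  have hdes (w : Fin (n + 1) → Fin (n + 1)) :
      des (List.ofFn fun i => (w i : ℕ) + 1) = #(descents w) := by
    rw [des_ofFn, ← descents_comp_of_strictMono (g := fun x : Fin (n + 1) => (x : ℕ) + 1)
      fun a b h => by simpa using h]
    rfl
  suffices hcoeff : (PowerSeries.mk fun m => ∑ j ∈ Finset.range (k + 1),
        (-1) ^ j * (k.choose j : ℤ) * (((n + 1 - j) * (m + 1)).choose (n + 1) : ℤ)) =
      (∑ w ∈ Finset.univ.filter
          (fun w : Fin (n + 1) → Fin (n + 1) => ∀ j : Fin (n + 1), (j : ℕ) < k → ∃ i, w i = j),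
        X ^ (n - #(descents w))) * (invOneSubPow ℤ (n + 2)).val by
    rw [← invOneSubPow_inv_eq_one_sub_pow, hcoeff, mul_assoc, Units.val_inv, mul_one,
      Nat.add_sub_cancel]
    simp only [hdes]
  ext m
  rw [coeff_mk, sum_mul, map_sum]
  simp only [coeff_X_pow_sub_mul_invOneSubPow ℤ (card_le_univ _ |>.trans (Fintype.card_fin n).le)]
  have key := sum_choose_add_card_descents_of_forall_exists n m
    ({j | (j : ℕ) < k} : Finset (Fin (n + 1)))
  rw [hK, Fintype.card_fin] at key
  rw [← key]
  simp
end

section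
/- For a weak composition μ = (a_1,…,a_n) of n, MacMahon's formula holds: ∑_{m ≥ 0} ∏_{i=1}^{n} C(m + a_i, a_i) · t^m = (∑_{w ∈ S_μ} t^{des(w)}) / (1−t)^{n+1}, where S_μ is the set of permutations of the multiset with a_i copies of i and des(w) counts descents of w. -/
open Finset PowerSeries

/-!
After dividing by `(1 - t)ⁿ⁺¹`, the coefficients of `tᵐ` on both sides count the monotone
maps `g : Fin n → Fin (m + 1) ×ₗ Fin n` whose second coordinates take each value `v` exactly `a v`
times. Read as a multiset, such a `g` splits into one multiset of size `a v` in `Fin (m + 1)`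
for every letter `v`, which gives `∏ C(m + a v, a v)`. Read through its word of second
coordinates `w ∈ S_μ`, the first coordinates of `g` form a weakly increasing sequence that
increases strictly at the descents of `w`; subtracting the number of earlier descents turns these
into arbitrary weakly increasing sequences in `Fin (m + 1 - des w)`, of which there are
`C(m - des w + n, n)` if `des w ≤ m` and none otherwise. Finally
`∑ₘ C(m - d + n, n) tᵐ = tᵈ / (1 - t)ⁿ⁺¹`, the sum running over `m ≥ d`.
-/

theorem List.countP_ofFn {α : Type*} (p : α → Bool) {k : ℕ} (f : Fin k → α) :
    (List.ofFn f).countP p = #{i | p (f i)} := by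
  have hcoe := Multiset.coe_countP (fun a => p a = true) (List.ofFn f)
  simp only [Bool.decide_eq_true] at hcoe
  rw [← hcoe, ← Fin.univ_val_map, Multiset.countP_map, Finset.card_def]
  rfl

theorem List.zip_tail_ofFn {α : Type*} {k : ℕ} (f : Fin (k + 1) → α) :
    (List.ofFn f).zip (List.ofFn f).tail =
      List.ofFn fun i : Fin k => (f i.castSucc, f i.succ) := by
  apply List.ext_getElem
  · simp
  · intro i _ _
    simp only [List.getElem_zip, List.getElem_tail, List.getElem_ofFn]
    rfl

theorem des_ofFn_s14 {k : ℕ} (f : Fin (k + 1) → ℕ) :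
    des (List.ofFn f) = #{i : Fin k | f i.succ < f i.castSucc} := by
  rw [des, List.zip_tail_ofFn, List.countP_ofFn]
  simp

section Monotone

variable {α : Type*} [LinearOrder α]

noncomputable def monotoneEquivSym (k : ℕ) : {f : Fin k → α // Monotone f} ≃ Sym α k where
  toFun f := ⟨List.ofFn f.1, by simp⟩
  invFun s := ⟨fun i => s.1.sort[(i : ℕ)]'(by simp),
    fun _ _ hij => (Multiset.pairwise_sort s.1 _).rel_get_of_le hij⟩
  left_inv f := by
    have hsort : (↑(List.ofFn f.1) : Multiset α).sort = List.ofFn f.1 :=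
      List.Perm.eq_of_sortedLE (List.sortedLE_iff_pairwise.2 (Multiset.pairwise_sort _ _))
        (List.sortedLE_ofFn_iff.2 f.2) (Multiset.coe_eq_coe.mp (Multiset.sort_eq _ _))
    ext i
    simp only [hsort, List.getElem_ofFn]
  right_inv s := by
    have hlist : List.ofFn (fun i : Fin k => s.1.sort[(i : ℕ)]'(by simp)) = s.1.sort :=
      List.ext_getElem (by simp) (by simp)
    ext1
    exact (congrArg _ hlist).trans (Multiset.sort_eq _ _)

theorem card_monotone_fin (p k : ℕ) :
    Nat.card {f : Fin k → Fin p // Monotone f} = p.multichoose k := by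
  rw [Nat.card_congr (monotoneEquivSym k), Nat.card_eq_fintype_card,
    Sym.card_sym_fin_eq_multichoose]

variable [Fintype α]

noncomputable def monotoneEquivNatSum (k : ℕ) :
    {f : Fin k → α // Monotone f} ≃ {P : α → ℕ // ∑ x, P x = k} :=
  (monotoneEquivSym k).trans (Sym.equivNatSumOfFintype α k)

theorem monotoneEquivNatSum_apply {k : ℕ} (f : {f : Fin k → α // Monotone f}) (x : α) :
    (monotoneEquivNatSum k f : α → ℕ) x = #{i | f.1 i = x} := by
  change Multiset.count x ↑(List.ofFn f.1) = _
  rw [← Fin.univ_val_map, Multiset.count_map, Finset.card_def, Finset.filter_val]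
  simp only [eq_comm]

end Monotone

section Content

variable {γ δ : Type*} [LinearOrder γ] [Fintype γ] [LinearOrder δ]

theorem card_filter_snd_eq_sum {n : ℕ} (g : Fin n → γ ×ₗ δ) (v : δ) :
    #{i | (ofLex (g i)).2 = v} = ∑ b, #{i | g i = toLex (b, v)} := by
  rw [card_eq_sum_card_fiberwise (f := fun i => (ofLex (g i)).1) (t := univ) (by simp)]
  refine sum_congr rfl fun b _ => congrArg card ?_
  ext i
  simp only [mem_filter, mem_univ, true_and, ← ofLex_inj, ofLex_toLex, Prod.ext_iff, and_comm]

theorem card_monotone_lex_content [Fintype δ] {n : ℕ} (a : δ → ℕ) (ha : ∑ v, a v = n) :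
    Nat.card {g : Fin n → γ ×ₗ δ // Monotone g ∧ ∀ v, #{i | (ofLex (g i)).2 = v} = a v} =
      ∏ v, (Fintype.card γ).multichoose (a v) :=
  calc _ = Nat.card {P : {P : γ ×ₗ δ → ℕ // ∑ x, P x = n} //
          ∀ v, ∑ b, P.1 (toLex (b, v)) = a v} :=
        Nat.card_congr <| (Equiv.subtypeSubtypeEquivSubtypeInter _ _).symm.trans <|
          Equiv.subtypeEquiv (monotoneEquivNatSum n) fun g => by
            simp only [card_filter_snd_eq_sum, monotoneEquivNatSum_apply]
    _ = Nat.card (∀ v, {Q : γ → ℕ // ∑ b, Q b = a v}) := Nat.card_congr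
        { toFun P v := ⟨fun b => P.1.1 (toLex (b, v)), P.2 v⟩
          invFun Q := ⟨⟨fun x => (Q (ofLex x).2).1 (ofLex x).1, by
            rw [← ha, ← Fintype.sum_equiv toLex (fun p => (Q p.2).1 p.1) _ (fun _ => rfl),
              Fintype.sum_prod_type_right]
            exact sum_congr rfl fun v _ => (Q v).2⟩, fun v => (Q v).2⟩
          left_inv _ := rfl
          right_inv _ := rfl }
    _ = ∏ v, (Fintype.card γ).multichoose (a v) := by
      rw [Nat.card_pi]
      refine prod_congr rfl fun v _ => ?_
      rw [← Nat.card_congr (Sym.equivNatSumOfFintype γ (a v)), Nat.card_eq_fintype_card,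
        Sym.card_sym_eq_multichoose]

end Content

section StrictAscents

variable {k : ℕ} (D : Finset (Fin k))

def countBefore (i : Fin (k + 1)) : ℕ := #{j ∈ D | j.castSucc < i}

theorem countBefore_zero : countBefore D 0 = 0 := by
  simp [countBefore]

theorem countBefore_last : countBefore D (Fin.last k) = #D := by
  simp [countBefore, Fin.castSucc_lt_last]

theorem countBefore_le_card (i : Fin (k + 1)) : countBefore D i ≤ #D :=
  card_filter_le _ _

theorem countBefore_succ (i : Fin k) :
    countBefore D i.succ = countBefore D i.castSucc + if i ∈ D then 1 else 0 := by
  simp only [countBefore, Fin.castSucc_lt_succ_iff, Fin.castSucc_lt_castSucc_iff]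
  split_ifs with hi
  · rw [← card_insert_of_notMem (a := i) (s := {j ∈ D | j < i}) (by simp)]
    congr 1
    ext j
    simp only [mem_filter, mem_insert, le_iff_lt_or_eq]
    grind
  · congr 1
    ext j
    simp only [mem_filter, le_iff_lt_or_eq]
    grind

theorem monotone_and_lt_on_iff_monotone_sub {m : ℕ} (e : Fin (k + 1) → Fin (m + 1)) :
    (Monotone e ∧ ∀ i ∈ D, e i.castSucc < e i.succ) ↔
      Monotone fun i => (e i : ℤ) - countBefore D i := by
  simp only [Fin.monotone_iff_le_succ, countBefore_succ, Fin.le_def, Fin.lt_def]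
  constructor
  · rintro ⟨hmono, hlt⟩ i
    have := hmono i
    split_ifs with hi
    · have := hlt i hi
      push_cast
      omega
    · omega
  · intro h
    refine ⟨fun i => ?_, fun i hi => ?_⟩
    · have := h i
      split_ifs at this <;> omega
    · have := h i
      rw [if_pos hi] at this
      push_cast at this
      omega

theorem countBefore_le_and_sub_add_card_le {m : ℕ} {e : Fin (k + 1) → Fin (m + 1)}
    (he : Monotone e ∧ ∀ i ∈ D, e i.castSucc < e i.succ) (i : Fin (k + 1)) :
    countBefore D i ≤ e i ∧ e i - countBefore D i + #D ≤ m := by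
  have hφ := (monotone_and_lt_on_iff_monotone_sub D e).1 he
  have h0 := hφ (Fin.zero_le i)
  have hlast := hφ (Fin.le_last i)
  have := (e (Fin.last k)).is_lt
  simp only [countBefore_zero, countBefore_last] at h0 hlast
  omega

def monotoneLtOnEquiv (m : ℕ) :
    {e : Fin (k + 1) → Fin (m + 1) // Monotone e ∧ ∀ i ∈ D, e i.castSucc < e i.succ} ≃
      {f : Fin (k + 1) → Fin (m + 1 - #D) // Monotone f} where
  toFun e := ⟨fun i => ⟨e.1 i - countBefore D i, by
      have := countBefore_le_and_sub_add_card_le D e.2 i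
      omega⟩, fun i j hij => by
      have hφ := (monotone_and_lt_on_iff_monotone_sub D e.1).1 e.2 hij
      dsimp only at hφ
      have := countBefore_le_and_sub_add_card_le D e.2 i
      have := countBefore_le_and_sub_add_card_le D e.2 j
      rw [Fin.mk_le_mk]
      omega⟩
  invFun f := ⟨fun i => ⟨f.1 i + countBefore D i, by
      have := (f.1 i).is_lt
      have := countBefore_le_card D i
      omega⟩, (monotone_and_lt_on_iff_monotone_sub D _).2 fun i j hij => by
      have := f.2 hij
      rw [Fin.le_def] at this
      simp only [Nat.cast_add, add_sub_cancel_right]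
      exact_mod_cast this⟩
  left_inv e := by
    ext i
    have := countBefore_le_and_sub_add_card_le D e.2 i
    simp only
    omega
  right_inv f := by
    ext i
    simp

theorem card_monotone_lt_on (m : ℕ) :
    Nat.card {e : Fin (k + 1) → Fin (m + 1) //
        Monotone e ∧ ∀ i ∈ D, e i.castSucc < e i.succ} =
      (m + 1 - #D).multichoose (k + 1) := by
  rw [Nat.card_congr (monotoneLtOnEquiv D m), card_monotone_fin]

end StrictAscents

section Descents

variable {γ δ : Type*} [LinearOrder γ] [LinearOrder δ] {k : ℕ}

def descentSet (w : Fin (k + 1) → δ) : Finset (Fin k) := {i | w i.succ < w i.castSucc}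

theorem monotone_toLex_iff (e : Fin (k + 1) → γ) (w : Fin (k + 1) → δ) :
    Monotone (fun i => toLex (e i, w i)) ↔
      Monotone e ∧ ∀ i ∈ descentSet w, e i.castSucc < e i.succ := by
  simp only [Fin.monotone_iff_le_succ, Prod.Lex.toLex_le_toLex, descentSet, mem_filter, mem_univ,
    true_and]
  constructor
  · intro h
    exact ⟨fun i => (h i).elim le_of_lt fun h => h.1.le,
      fun i hi => (h i).resolve_right fun h => h.2.not_gt hi⟩
  · rintro ⟨hmono, hlt⟩ i
    rcases (hmono i).lt_or_eq with h | h
    · exact Or.inl h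
    · exact Or.inr ⟨h, le_of_not_gt fun hi => (hlt i hi).ne h⟩

def monotoneLexEquivSigma (Q : (Fin (k + 1) → δ) → Prop) :
    {g : Fin (k + 1) → γ ×ₗ δ // Monotone g ∧ Q fun i => (ofLex (g i)).2} ≃
      Σ w : {w // Q w}, {e : Fin (k + 1) → γ //
        Monotone e ∧ ∀ i ∈ descentSet w.1, e i.castSucc < e i.succ} where
  toFun g := ⟨⟨fun i => (ofLex (g.1 i)).2, g.2.2⟩, fun i => (ofLex (g.1 i)).1,
    (monotone_toLex_iff _ _).1 g.2.1⟩
  invFun p := ⟨fun i => toLex (p.2.1 i, p.1.1 i), (monotone_toLex_iff _ _).2 p.2.2, p.1.2⟩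
  left_inv _ := rfl
  right_inv _ := rfl

end Descents

theorem prod_choose_eq_sum_multichoose (k m : ℕ) (a : Fin (k + 1) → ℕ)
    (ha : ∑ v, a v = k + 1) :
    ∏ v, (m + a v).choose (a v) =
      ∑ w ∈ {w : Fin (k + 1) → Fin (k + 1) | ∀ v, #{i | w i = v} = a v},
        (m + 1 - #(descentSet w)).multichoose (k + 1) := by
  calc ∏ v, (m + a v).choose (a v) = ∏ v, (m + 1).multichoose (a v) :=
        prod_congr rfl fun v _ => by
          rw [Nat.multichoose_eq, Nat.add_right_comm, Nat.add_sub_cancel]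
    _ = Nat.card {g : Fin (k + 1) → Fin (m + 1) ×ₗ Fin (k + 1) //
          Monotone g ∧ ∀ v, #{i | (ofLex (g i)).2 = v} = a v} := by
        rw [card_monotone_lex_content a ha, Fintype.card_fin]
    _ = ∑ w : {w : Fin (k + 1) → Fin (k + 1) // ∀ v, #{i | w i = v} = a v},
          (m + 1 - #(descentSet w.1)).multichoose (k + 1) := by
        rw [Nat.card_congr (monotoneLexEquivSigma fun w => ∀ v, #{i | w i = v} = a v),
          Nat.card_sigma]
        exact Fintype.sum_congr _ _ fun w => card_monotone_lt_on _ m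
    _ = _ := by
        rw [sum_subtype _ (p := fun w : Fin (k + 1) → Fin (k + 1) => ∀ v, #{i | w i = v} = a v)]
        simp

theorem mk_multichoose_mul_one_sub_pow {R : Type*} [CommRing R] {n : ℕ} (hn : 0 < n) (d : ℕ) :
    (PowerSeries.mk fun m => ((m + 1 - d).multichoose n : R)) * (1 - X) ^ (n + 1) = X ^ d := by
  have hshift : (PowerSeries.mk fun m => ((m + 1 - d).multichoose n : R)) =
      X ^ d * PowerSeries.mk fun j => ((n + j).choose n : R) := by
    ext m
    rw [coeff_X_pow_mul', coeff_mk, Nat.multichoose_eq]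
    split_ifs with h
    · rw [coeff_mk]
      congr 2
      omega
    · rw [Nat.choose_eq_zero_of_lt (by omega), Nat.cast_zero]
  rw [hshift, mul_assoc, mk_add_choose_mul_one_sub_pow_eq_one, mul_one]

theorem stmt_14 (n : ℕ) (hn : 0 < n) (a : Fin n → ℕ) (hsum : ∑ i, a i = n) :
    (PowerSeries.mk fun m => ∏ i, ((m + a i).choose (a i) : ℤ)) *
        (1 - PowerSeries.X) ^ (n + 1) =
      ∑ w ∈ Finset.univ.filter
          (fun w : Fin n → Fin n =>
            ∀ v : Fin n, (Finset.univ.filter (fun i => w i = v)).card = a v),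
        (PowerSeries.X : PowerSeries ℤ) ^ des (List.ofFn fun i => (w i : ℕ) + 1) := by
  obtain ⟨k, rfl⟩ : ∃ k, n = k + 1 := ⟨n - 1, by omega⟩
  have hseries : (PowerSeries.mk fun m => ∏ i, ((m + a i).choose (a i) : ℤ)) =
      ∑ w ∈ {w : Fin (k + 1) → Fin (k + 1) | ∀ v, #{i | w i = v} = a v},
        PowerSeries.mk fun m => ((m + 1 - #(descentSet w)).multichoose (k + 1) : ℤ) := by
    ext m
    simp only [coeff_mk, map_sum]
    exact_mod_cast prod_choose_eq_sum_multichoose k m a hsum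
  rw [hseries, sum_mul]
  refine sum_congr rfl fun w _ => ?_
  rw [mk_multichoose_mul_one_sub_pow hn, des_ofFn_s14]
  simp [descentSet]
end

section
/- For positive integers n, d, k with k ≤ min{n,d} and every natural number m, the number of lattice points x ∈ ℕ^n with x_1 + ⋯ + x_n ≤ dm and x_i ≤ m for 1 ≤ i ≤ k equals ∑_{j=0}^{k} (-1)^j C(k,j) C((d-j)m + n − j, n). -/
open Finset

namespace Stmt15Aux

/-- The set of lattice points with sum bounded by `N` and the first `k`
coordinates bounded by `m`. -/
def S (n m N k : ℕ) : Set (Fin n → ℕ) :=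
  {x | ∑ i, x i ≤ N ∧ ∀ i : Fin n, (i : ℕ) < k → x i ≤ m}

/-- Signed binomial count: `choose (t + n) n` when `t ≥ 0`, else `0`. -/
def B (n : ℕ) (t : ℤ) : ℤ := if 0 ≤ t then (((t.toNat + n).choose n : ℕ) : ℤ) else 0

lemma S_finite (n m N k : ℕ) : (S n m N k).Finite := by
  apply Set.Finite.subset (Set.Finite.pi (t := fun _ : Fin n => Set.Iic N)
    (fun _ => Set.finite_Iic N))
  intro x hx
  rw [Set.mem_pi]
  intro i _
  exact le_trans (Finset.single_le_sum (f := x) (fun j _ => Nat.zero_le _)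
    (Finset.mem_univ i)) hx.1

/-- Stars and bars: counting tuples with sum exactly `N`. -/
noncomputable def symEquiv (q N : ℕ) : Sym (Fin q) N ≃ {x : Fin q → ℕ // ∑ i, x i = N} :=
  Equiv.subtypeEquiv (Multiset.toFinsupp.toEquiv.trans Finsupp.equivFunOnFinite)
    (by
      intro s
      simp only [Equiv.trans_apply, AddEquiv.toEquiv_eq_coe, EquivLike.coe_coe,
        Finsupp.equivFunOnFinite_apply, Multiset.toFinsupp_apply]
      rw [Multiset.sum_count_eq_card (fun a _ => Finset.mem_univ a)])

/-- Adding a slack variable. -/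
def slackEquiv (q N : ℕ) : {x : Fin (q + 1) → ℕ // ∑ i, x i = N} ≃
    {y : Fin q → ℕ // ∑ i, y i ≤ N} where
  toFun x := ⟨fun i => x.1 i.succ, by
    show ∑ i : Fin q, x.1 i.succ ≤ N
    have := x.2
    rw [Fin.sum_univ_succ] at this
    omega⟩
  invFun y := ⟨Fin.cons (N - ∑ i, y.1 i) y.1, by
    rw [Fin.sum_univ_succ]
    simp only [Fin.cons_zero, Fin.cons_succ]
    omega⟩
  left_inv := by
    rintro ⟨x, hx⟩
    ext i
    rw [Fin.sum_univ_succ] at hx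
    refine Fin.cases ?_ ?_ i
    · simp only [Fin.cons_zero]
      omega
    · intro j
      simp
  right_inv := by
    rintro ⟨y, hy⟩
    ext i
    simp

lemma card_sum_le (q N : ℕ) : {x : Fin q → ℕ | ∑ i, x i ≤ N}.ncard = (N + q).choose q := by
  rw [← Nat.card_coe_set_eq]
  have e : Sym (Fin (q + 1)) N ≃ {x : Fin q → ℕ | ∑ i, x i ≤ N} :=
    (symEquiv (q + 1) N).trans (slackEquiv q N)
  rw [← Nat.card_congr e, Nat.card_eq_fintype_card, Sym.card_sym_eq_choose,
    Fintype.card_fin]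
  rw [show q + 1 + N - 1 = N + q by omega]
  exact (Nat.choose_symm (Nat.le_add_left q N)).symm ▸
    (by rw [show N + q - q = N by omega])

lemma base (n m N : ℕ) : ((S n m N 0).ncard : ℤ) = B n (N : ℤ) := by
  have h : S n m N 0 = {x : Fin n → ℕ | ∑ i, x i ≤ N} := by
    ext x
    simp [S]
  rw [h, card_sum_le, B, if_pos (by positivity : (0 : ℤ) ≤ (N : ℤ))]
  simp

lemma S_succ_of_le {n m N k : ℕ} (h : N ≤ m) : S n m N (k + 1) = S n m N k := by
  ext x
  constructor
  · rintro ⟨h1, h2⟩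
    exact ⟨h1, fun i hi => h2 i (by omega)⟩
  · rintro ⟨h1, h2⟩
    refine ⟨h1, fun i _ => ?_⟩
    exact le_trans (le_trans (Finset.single_le_sum (f := x)
      (fun j _ => Nat.zero_le _) (Finset.mem_univ i)) h1) h

lemma sum_update_add {n : ℕ} (y : Fin n → ℕ) (j : Fin n) (c : ℕ) :
    ∑ i, Function.update y j (y j + c) i = (∑ i, y i) + c := by
  rw [Finset.sum_update_of_mem (Finset.mem_univ j),
    Finset.sum_eq_sum_sdiff_singleton_add (Finset.mem_univ j) y]
  omega

/-- The shift bijection: points with `x_k ≥ m+1` and budget `N + (m+1)`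
biject with points with budget `N`. -/
lemma shift_card {n m N k : ℕ} (hk : k < n) :
    {x | x ∈ S n m (N + (m + 1)) k ∧ m + 1 ≤ x ⟨k, hk⟩}.ncard = (S n m N k).ncard := by
  set j : Fin n := ⟨k, hk⟩
  have hjval : (j : ℕ) = k := rfl
  set g : (Fin n → ℕ) → (Fin n → ℕ) := fun y => Function.update y j (y j + (m + 1)) with hg
  have hinj : Function.Injective g := by
    intro y y' h
    funext i
    by_cases hij : i = j
    · subst hij
      have := congrFun h j
      simp only [g, Function.update_self] at this
      omega
    · have := congrFun h i
      simpa [g, Function.update_of_ne hij] using this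
  have himg : g '' (S n m N k) = {x | x ∈ S n m (N + (m + 1)) k ∧ m + 1 ≤ x j} := by
    ext x
    constructor
    · rintro ⟨y, ⟨hy1, hy2⟩, rfl⟩
      refine ⟨⟨?_, ?_⟩, ?_⟩
      · rw [hg]
        simp only
        rw [sum_update_add]
        omega
      · intro i hi
        have hij : i ≠ j := by
          intro hij
          rw [hij] at hi
          omega
        simpa [g, Function.update_of_ne hij] using hy2 i hi
      · simp [g]
    · rintro ⟨⟨h1, h2⟩, h3⟩
      refine ⟨Function.update x j (x j - (m + 1)), ⟨?_, ?_⟩, ?_⟩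
      · have := sum_update_add (Function.update x j (x j - (m + 1))) j (m + 1)
        rw [Function.update_idem, Function.update_self] at this
        rw [show x j - (m + 1) + (m + 1) = x j by omega, Function.update_eq_self] at this
        omega
      · intro i hi
        have hij : i ≠ j := by
          intro hij
          rw [hij] at hi
          omega
        simpa [Function.update_of_ne hij] using h2 i hi
      · rw [hg]
        simp only
        rw [Function.update_idem, Function.update_self,
          show x j - (m + 1) + (m + 1) = x j by omega, Function.update_eq_self]
  rw [← himg, Set.ncard_image_of_injective _ hinj]

lemma split_card {n m N k : ℕ} (hk : k < n) :
    (S n m N k).ncard =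
      (S n m N (k + 1)).ncard + {x | x ∈ S n m N k ∧ m + 1 ≤ x ⟨k, hk⟩}.ncard := by
  set j : Fin n := ⟨k, hk⟩
  have hjval : (j : ℕ) = k := rfl
  have hunion : S n m N k = S n m N (k + 1) ∪ {x | x ∈ S n m N k ∧ m + 1 ≤ x j} := by
    ext x
    constructor
    · rintro ⟨h1, h2⟩
      by_cases hx : x j ≤ m
      · left
        refine ⟨h1, fun i hi => ?_⟩
        rcases Nat.lt_or_ge (i : ℕ) k with h | h
        · exact h2 i h
        · have : i = j := Fin.ext (by omega)
          rw [this]; exact hx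
      · right
        exact ⟨⟨h1, h2⟩, by omega⟩
    · rintro (⟨h1, h2⟩ | ⟨hx, _⟩)
      · exact ⟨h1, fun i hi => h2 i (by omega)⟩
      · exact hx
  have hdisj : Disjoint (S n m N (k + 1)) {x | x ∈ S n m N k ∧ m + 1 ≤ x j} := by
    rw [Set.disjoint_left]
    rintro x ⟨_, h2⟩ ⟨_, h3⟩
    have := h2 j (by omega)
    omega
  nth_rewrite 1 [hunion]
  rw [Set.ncard_union_eq hdisj (S_finite n m N (k + 1))
    ((S_finite n m N k).subset fun x hx => hx.1)]

lemma pascal_sum (k : ℕ) (f : ℕ → ℤ) :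
    ∑ j ∈ Finset.range (k + 2), (-1 : ℤ) ^ j * ((k + 1).choose j : ℤ) * f j =
      ∑ j ∈ Finset.range (k + 1), (-1 : ℤ) ^ j * (k.choose j : ℤ) * f j -
        ∑ i ∈ Finset.range (k + 1), (-1 : ℤ) ^ i * (k.choose i : ℤ) * f (i + 1) := by
  have h1 : ∀ i ∈ Finset.range (k + 1),
      (-1 : ℤ) ^ (i + 1) * ((k + 1).choose (i + 1) : ℤ) * f (i + 1) =
        (-1 : ℤ) ^ (i + 1) * (k.choose (i + 1) : ℤ) * f (i + 1) -
          (-1 : ℤ) ^ i * (k.choose i : ℤ) * f (i + 1) := by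
    intro i _
    rw [Nat.choose_succ_succ]
    push_cast
    ring
  rw [Finset.sum_range_succ' _ (k + 1), Finset.sum_congr rfl h1, Finset.sum_sub_distrib]
  have h3 := Finset.sum_range_succ' (fun j => (-1 : ℤ) ^ j * (k.choose j : ℤ) * f j) (k + 1)
  rw [Finset.sum_range_succ (fun j => (-1 : ℤ) ^ j * (k.choose j : ℤ) * f j) (k + 1),
    Nat.choose_succ_self] at h3
  simp only [Nat.cast_zero, mul_zero, zero_mul, add_zero, Nat.choose_zero_right,
    Nat.cast_one, pow_zero, one_mul, mul_one] at h3
  rw [Nat.choose_zero_right]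
  push_cast
  linarith [h3]

lemma gen (n m : ℕ) : ∀ k, k ≤ n → ∀ N : ℕ,
    ((S n m N k).ncard : ℤ) =
      ∑ j ∈ Finset.range (k + 1),
        (-1) ^ j * (k.choose j : ℤ) * B n ((N : ℤ) - j * (m + 1)) := by
  intro k
  induction k with
  | zero =>
    intro _ N
    rw [show (0 : ℕ) + 1 = 1 from rfl, Finset.sum_range_one]
    simpa using base n m N
  | succ k ih =>
    intro hk1 N
    have hk : k < n := hk1
    have ihk := ih (le_of_lt hk)
    rcases le_or_gt N m with h | h
    · -- extra constraint is vacuous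
      rw [S_succ_of_le h, ihk N]
      have hz : ∀ j : ℕ, 1 ≤ j → B n ((N : ℤ) - j * (m + 1)) = 0 := by
        intro j hj
        rw [B, if_neg]
        push_neg
        have : (m : ℤ) + 1 ≤ j * (m + 1) := le_mul_of_one_le_left (by positivity) (by exact_mod_cast hj)
        have hN : (N : ℤ) ≤ m := by exact_mod_cast h
        omega
      rw [Finset.sum_eq_single_of_mem 0 (Finset.mem_range.2 (by omega))
        (fun j _ hj => by rw [hz j (by omega)]; ring),
        Finset.sum_eq_single_of_mem 0 (Finset.mem_range.2 (by omega))
        (fun j _ hj => by rw [hz j (by omega)]; ring)]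
      norm_num
    · -- N ≥ m + 1 : use the recursion
      obtain ⟨N', rfl⟩ : ∃ N', N = N' + (m + 1) := ⟨N - (m + 1), by omega⟩
      have key : ((S n m (N' + (m + 1)) (k + 1)).ncard : ℤ) =
          ((S n m (N' + (m + 1)) k).ncard : ℤ) - ((S n m N' k).ncard : ℤ) := by
        have h1 := split_card (n := n) (m := m) (N := N' + (m + 1)) hk
        have h2 := shift_card (n := n) (m := m) (N := N') hk
        rw [h2] at h1
        push_cast [h1]
        ring
      rw [key, ihk (N' + (m + 1)), ihk N']
      rw [show k + 1 + 1 = k + 2 from rfl,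
        pascal_sum k (fun j => B n (((N' + (m + 1) : ℕ) : ℤ) - j * ((m : ℤ) + 1)))]
      congr 1
      apply Finset.sum_congr rfl
      intro i _
      congr 1
      push_cast
      ring

end Stmt15Aux

open Stmt15Aux in
theorem stmt_15 (n d k m : ℕ) (hn : 0 < n) (hd : 0 < d) (hkn : k ≤ n) (hkd : k ≤ d) :
    ({x : Fin n → ℕ |
        (∑ i, x i ≤ d * m) ∧ ∀ i : Fin n, (i : ℕ) < k → x i ≤ m}.ncard : ℤ) =
      ∑ j ∈ Finset.range (k + 1),
        (-1) ^ j * (k.choose j : ℤ) * (((d - j) * m + n - j).choose n : ℤ) := by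
  have hS : {x : Fin n → ℕ |
        (∑ i, x i ≤ d * m) ∧ ∀ i : Fin n, (i : ℕ) < k → x i ≤ m} = S n m (d * m) k := rfl
  rw [hS, gen n m k hkn (d * m)]
  apply Finset.sum_congr rfl
  intro j hj
  have hjk : j ≤ k := by
    have := Finset.mem_range.1 hj
    omega
  congr 1
  have hjn : j ≤ n := le_trans hjk hkn
  obtain ⟨a, rfl⟩ : ∃ a, d = j + a := ⟨d - j, by omega⟩
  rw [show j + a - j = a by omega]
  have e1 : (j + a) * m = j * m + a * m := by ring
  have e2 : ((j * m + a * m : ℕ) : ℤ) - (j : ℤ) * ((m : ℤ) + 1) =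
      ((a * m : ℕ) : ℤ) - (j : ℤ) := by push_cast; ring
  rw [e1, B, e2]
  rcases le_or_gt j (a * m) with hc | hc
  · rw [if_pos (by omega)]
    have ht : (((a * m : ℕ) : ℤ) - (j : ℤ)).toNat = a * m - j := by omega
    rw [ht, show a * m - j + n = a * m + n - j by omega]
  · rw [if_neg (by omega)]
    rw [Nat.choose_eq_zero_of_lt (by omega)]
    simp
end

section
/- For positive integers n, d, k with d ≥ n and k ≤ n, the polynomial ∑_{j=0}^{k} (-1)^j C(k,j) ∏_{i=0}^{n-1} ((d−n+i)t + n − j − i) equals ∑_{w ∈ W_{n,d,k}} t^{unlucky(w)}, where W_{n,d,k} is the set of words w ∈ [d]^n containing each of 1,…,k at least once, and unlucky(w) counts cars not parking in their preferred space under the protocol in which n cars park in order on spaces 1,…,n, car C_i parks in space w_i if w_i ≤ n and space w_i is free, and otherwise parks in the largest free space. In particular this polynomial has nonnegative coefficients. -/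
open Finset Polynomial

/-!
Remove the first car. With preference `q` it parks in space `π = min q (m + 1)`, and is unlucky
when `q > m + 1`. Deleting space `π` and renumbering, the remaining cars run the same
protocol on `m` spaces, with their preferences moved by a permutation of `[d]`; that permutation
carries the letters `< k` other than the first letter onto the letters `< k - 1` (or `< k` when
the first letter is `≥ k`). Summing over the first letter gives the recursion
`P(m+1, k) = k P(m, k-1) + ((m + 1 - k) + (d - m - 1) t) P(m, k)` for the unlucky generating
function. The alternating sum satisfies the same recursion, by
`(k + 1 - j) C(k+1, j) = (k + 1) C(k, j)`, and at `m = 0` both equal `[k = 0]`.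
-/

namespace Parking

def collapse (π q : ℕ) : ℕ := if q < π then q else q - 1

def uncollapse (π x : ℕ) : ℕ := if x < π then x else x + 1

def collapseSet (π : ℕ) (s : Finset ℕ) : Finset ℕ := (s.erase π).image (collapse π)

/- Once the first car occupies space `π`, the street minus `π` is renumbered `1,…,m` by `collapse`;
the preferences are renumbered alongside, except that a preference for the taken space `π`
is sent to `m + 1`, which is off the new street, so the car is still unlucky. -/
def relabel (π m v : ℕ) : ℕ :=
  if v < π then v else if v = π then m + 1 else if v ≤ m + 1 then v - 1 else v

lemma relabel_injective {π m : ℕ} (hπ : π ≤ m + 1) : Function.Injective (relabel π m) := by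
  intro a b h; unfold relabel at h; split_ifs at h <;> omega

lemma collapse_monotone (π : ℕ) : Monotone (collapse π) := by
  intro a b hab; unfold collapse; split_ifs <;> omega

lemma collapse_eq_and_ne_iff {π q x : ℕ} : collapse π q = x ∧ q ≠ π ↔ q = uncollapse π x := by
  unfold collapse uncollapse; split_ifs <;> omega

lemma mem_collapseSet {π x : ℕ} {s : Finset ℕ} : x ∈ collapseSet π s ↔ uncollapse π x ∈ s := by
  simp only [collapseSet, mem_image, mem_erase]
  constructor
  · rintro ⟨q, ⟨hqπ, hqs⟩, hqx⟩
    exact collapse_eq_and_ne_iff.mp ⟨hqx, hqπ⟩ ▸ hqs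
  · intro hx
    obtain ⟨hqx, hqπ⟩ := collapse_eq_and_ne_iff.mpr (rfl : uncollapse π x = _)
    exact ⟨_, ⟨hqπ, hx⟩, hqx⟩

lemma collapseSet_insert {π a : ℕ} (ha : a ≠ π) (s : Finset ℕ) :
    collapseSet π (insert a s) = insert (collapse π a) (collapseSet π s) := by
  rw [collapseSet, erase_insert_of_ne ha, image_insert, collapseSet]

lemma collapseSet_singleton (π : ℕ) : collapseSet π {π} = ∅ := by
  rw [collapseSet, erase_singleton, image_empty]

section

variable {π m : ℕ}

lemma sdiff_collapseSet (hπ₁ : 1 ≤ π) (hπ₂ : π ≤ m + 1) {s : Finset ℕ} (hπ : π ∈ s) :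
    Icc 1 m \ collapseSet π s = (Icc 1 (m + 1) \ s).image (collapse π) := by
  ext x
  simp only [mem_sdiff, mem_collapseSet, mem_image]
  constructor
  · rintro ⟨hx, hxs⟩
    obtain ⟨hqx, -⟩ := collapse_eq_and_ne_iff.mpr (rfl : uncollapse π x = _)
    refine ⟨_, ⟨?_, hxs⟩, hqx⟩
    simp only [mem_Icc, uncollapse] at hx ⊢; split_ifs <;> omega
  · rintro ⟨q, ⟨hq, hqs⟩, rfl⟩
    have hqπ : q ≠ π := by rintro rfl; exact hqs hπ
    have hq' := (collapse_eq_and_ne_iff (x := collapse π q)).mp ⟨rfl, hqπ⟩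
    refine ⟨?_, by rwa [← hq']⟩
    simp only [mem_Icc, collapse] at hq ⊢; split_ifs <;> omega

lemma unbotD_max_image_collapse (F : Finset ℕ) :
    WithBot.unbotD 0 (F.image (collapse π)).max = collapse π (WithBot.unbotD 0 F.max) := by
  rcases F.eq_empty_or_nonempty with rfl | hF
  · simp [collapse]
  · rw [← coe_max' hF, ← coe_max' (hF.image _), WithBot.unbotD_coe, WithBot.unbotD_coe,
      max'_image (collapse_monotone π)]

lemma largestFree_ne {n : ℕ} {s : Finset ℕ} (hπ₁ : 1 ≤ π) (hπ : π ∈ s) :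
    WithBot.unbotD 0 (Icc 1 n \ s).max ≠ π := by
  rcases (Icc 1 n \ s).eq_empty_or_nonempty with h | h
  · rw [h, max_empty, WithBot.unbotD_bot]; omega
  · rw [← coe_max' h, WithBot.unbotD_coe]
    exact fun he => (mem_sdiff.mp (he ▸ max'_mem _ h)).2 hπ

lemma relabel_mem_Icc_iff (hπ₁ : 1 ≤ π) (hπ₂ : π ≤ m + 1) {v : ℕ} :
    relabel π m v ∈ Icc 1 m ↔ v ∈ Icc 1 (m + 1) ∧ v ≠ π := by
  simp only [mem_Icc, relabel]; split_ifs <;> omega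

lemma uncollapse_relabel {v : ℕ} (hv : v ≤ m + 1) (hvπ : v ≠ π) :
    uncollapse π (relabel π m v) = v := by
  unfold uncollapse relabel; split_ifs <;> omega

lemma relabel_free_iff (hπ₁ : 1 ≤ π) (hπ₂ : π ≤ m + 1) {s : Finset ℕ} (hπ : π ∈ s) (v : ℕ) :
    (relabel π m v ∈ Icc 1 m ∧ relabel π m v ∉ collapseSet π s) ↔ (v ∈ Icc 1 (m + 1) ∧ v ∉ s) := by
  rw [mem_collapseSet, relabel_mem_Icc_iff hπ₁ hπ₂]
  constructor
  · rintro ⟨⟨hv, hvπ⟩, hs⟩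
    exact ⟨hv, by rwa [uncollapse_relabel (mem_Icc.1 hv).2 hvπ] at hs⟩
  · rintro ⟨hv, hs⟩
    have hvπ : v ≠ π := fun h => hs (h ▸ hπ)
    exact ⟨⟨hv, hvπ⟩, by rwa [uncollapse_relabel (mem_Icc.1 hv).2 hvπ]⟩

lemma relabel_eq_collapse {v : ℕ} (hv : v ∈ Icc 1 (m + 1)) (hvπ : v ≠ π) :
    relabel π m v = collapse π v := by
  rw [mem_Icc] at hv
  unfold relabel collapse; split_ifs <;> omega

lemma parkStep_relabel (hπ₁ : 1 ≤ π) (hπ₂ : π ≤ m + 1) {s : Finset ℕ} (hπ : π ∈ s) (c v : ℕ) :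
    parkStep m (collapseSet π s, c) (relabel π m v) =
      Prod.map (collapseSet π) id (parkStep (m + 1) (s, c) v) := by
  unfold parkStep
  by_cases hfree : v ∈ Icc 1 (m + 1) ∧ v ∉ s
  · have hvπ : v ≠ π := fun h => hfree.2 (h ▸ hπ)
    rw [if_pos ((relabel_free_iff hπ₁ hπ₂ hπ v).mpr hfree), if_pos hfree, Prod.map_apply,
      collapseSet_insert hvπ, relabel_eq_collapse hfree.1 hvπ]
    rfl
  · rw [if_neg (mt (relabel_free_iff hπ₁ hπ₂ hπ v).mp hfree), if_neg hfree, Prod.map_apply,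
      collapseSet_insert (largestFree_ne hπ₁ hπ), sdiff_collapseSet hπ₁ hπ₂ hπ,
      unbotD_max_image_collapse]
    rfl

lemma subset_parkStep (n : ℕ) (x : Finset ℕ × ℕ) (v : ℕ) : x.1 ⊆ (parkStep n x v).1 := by
  unfold parkStep; split_ifs <;> exact subset_insert _ _

lemma foldl_parkStep_relabel (hπ₁ : 1 ≤ π) (hπ₂ : π ≤ m + 1) (l : List ℕ) {s : Finset ℕ}
    (hπ : π ∈ s) (c : ℕ) :
    (l.map (relabel π m)).foldl (parkStep m) (collapseSet π s, c) =
      Prod.map (collapseSet π) id (l.foldl (parkStep (m + 1)) (s, c)) := by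
  induction l generalizing s c with
  | nil => rfl
  | cons v l ih =>
    rw [List.map_cons, List.foldl_cons, List.foldl_cons, parkStep_relabel hπ₁ hπ₂ hπ]
    exact ih (subset_parkStep _ _ _ hπ) _

lemma parkStep_add (n : ℕ) (s : Finset ℕ) (a b v : ℕ) :
    parkStep n (s, a + b) v = Prod.map id (a + ·) (parkStep n (s, b) v) := by
  unfold parkStep; split_ifs <;> simp [add_assoc]

lemma foldl_parkStep_add (n : ℕ) (l : List ℕ) (s : Finset ℕ) (a b : ℕ) :
    l.foldl (parkStep n) (s, a + b) = Prod.map id (a + ·) (l.foldl (parkStep n) (s, b)) := by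
  induction l generalizing s b with
  | nil => rfl
  | cons v l ih =>
    rw [List.foldl_cons, List.foldl_cons, parkStep_add]
    exact ih _ _

lemma parkStep_empty {q : ℕ} (hq : 1 ≤ q) :
    parkStep (m + 1) (∅, 0) q = ({min q (m + 1)}, if m + 1 < q then 1 else 0) := by
  unfold parkStep
  by_cases h : q ≤ m + 1
  · rw [if_pos (by simp; omega), if_neg (by omega), min_eq_left h]; rfl
  · have hne : (Icc 1 (m + 1)).Nonempty := nonempty_Icc.mpr (by omega)
    have hmax : (Icc 1 (m + 1)).max' hne = m + 1 :=
      le_antisymm (max'_le _ _ _ fun y hy => (mem_Icc.1 hy).2) (le_max' _ _ (by simp))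
    rw [if_neg (by simp; omega), if_pos (by omega), min_eq_right (by omega), sdiff_empty,
      ← coe_max' hne, WithBot.unbotD_coe, hmax]
    rfl

theorem unlucky_cons {q : ℕ} (hq : 1 ≤ q) (l : List ℕ) :
    unlucky (m + 1) (q :: l) =
      (if m + 1 < q then 1 else 0) + unlucky m (l.map (relabel (min q (m + 1)) m)) := by
  have h := foldl_parkStep_relabel (m := m) (π := min q (m + 1)) (by omega) (by omega) l
    (mem_singleton_self _) (if m + 1 < q then 1 else 0)
  rw [collapseSet_singleton, ← add_zero (ite _ _ _), foldl_parkStep_add] at h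
  rw [unlucky, unlucky, List.foldl_cons, parkStep_empty hq]
  exact congrArg Prod.snd h.symm

end

noncomputable def factorProd (d m j : ℕ) : ℤ[X] :=
  ∏ i ∈ range m, (C ((d : ℤ) - m + i) * X + C ((m : ℤ) - j - i))

noncomputable def altSumPoly (d m k : ℕ) : ℤ[X] :=
  ∑ j ∈ range (k + 1), (-1) ^ j * C ((k.choose j : ℤ)) * factorProd d m j

lemma factorProd_succ (d m j : ℕ) :
    factorProd d (m + 1) j =
      (C ((d : ℤ) - (m + 1)) * X + C ((m : ℤ) + 1 - j)) * factorProd d m j := by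
  rw [factorProd, prod_range_succ', mul_comm, factorProd]
  congr 1
  · push_cast; ring_nf
  · refine prod_congr rfl fun i _ => ?_
    push_cast; ring_nf

lemma altSumPoly_zero (d k : ℕ) : altSumPoly d 0 k = if k = 0 then 1 else 0 := by
  have hC : ∀ j, (-1 : ℤ[X]) ^ j * C (k.choose j : ℤ) = C ((-1) ^ j * (k.choose j : ℤ)) := by simp
  simp only [altSumPoly, factorProd, range_zero, prod_empty, mul_one, hC, ← map_sum,
    Int.alternating_sum_range_choose]
  split_ifs <;> simp

lemma intCast_choose_succ_mul (k j : ℕ) :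
    ((k + 1).choose j : ℤ) * ((k : ℤ) + 1 - j) = ((k : ℤ) + 1) * k.choose j := by
  rcases le_or_gt j (k + 1) with hj | hj
  · have := Nat.choose_mul_succ_eq k j
    zify [hj] at this
    linarith
  · simp [Nat.choose_eq_zero_of_lt hj, Nat.choose_eq_zero_of_lt (by omega : k < j)]

lemma altSumPoly_succ (d m k : ℕ) :
    altSumPoly d (m + 1) k = C (k : ℤ) * altSumPoly d m (k - 1) +
      (C ((d : ℤ) - (m + 1)) * X + C ((m : ℤ) + 1 - k)) * altSumPoly d m k := by
  cases k with
  | zero => simp [altSumPoly, factorProd_succ]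
  | succ k =>
    have hext : altSumPoly d m k =
        ∑ j ∈ range (k + 2), (-1) ^ j * C ((k.choose j : ℤ)) * factorProd d m j := by
      rw [sum_range_succ, Nat.choose_succ_self, Nat.cast_zero, C_0, mul_zero, zero_mul, add_zero,
        altSumPoly]
    rw [Nat.add_sub_cancel, hext, altSumPoly, altSumPoly, mul_sum, mul_sum, ← sum_add_distrib]
    refine sum_congr rfl fun j _ => ?_
    have key := congrArg C (intCast_choose_succ_mul k j)
    rw [factorProd_succ]
    push_cast
    simp only [map_sub, map_add, map_mul, map_natCast, map_one] at key ⊢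
    linear_combination (-1 : ℤ[X]) ^ j * factorProd d m j * key

noncomputable def unluckyGF (d m k : ℕ) : ℤ[X] :=
  ∑ w ∈ univ.filter (fun w : Fin m → Fin d => ∀ j : Fin d, (j : ℕ) < k → ∃ i, w i = j),
    X ^ unlucky m (List.ofFn fun i => (w i : ℕ) + 1)

lemma unluckyGF_zero {d k : ℕ} (hk : k ≤ d) : unluckyGF d 0 k = if k = 0 then 1 else 0 := by
  split_ifs with hk0
  · subst hk0
    simp [unluckyGF, unlucky]
  · rw [unluckyGF, filter_false_of_mem, sum_empty]
    intro w _ hw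
    obtain ⟨i, -⟩ := hw ⟨0, by omega⟩ (by simp; omega)
    exact i.elim0

lemma unluckyGF_eq_zero {d m k : ℕ} (hm : m < k) (hk : k ≤ d) : unluckyGF d m k = 0 := by
  rw [unluckyGF, filter_false_of_mem, sum_empty]
  intro w _ hw
  have hsub : univ.filter (fun j : Fin d => (j : ℕ) < k) ⊆ univ.image w := fun j hj => by
    obtain ⟨i, hi⟩ := hw j (mem_filter.mp hj).2
    exact mem_image.mpr ⟨i, mem_univ _, hi⟩
  have := (card_le_card hsub).trans card_image_le
  rw [Fin.card_filter_val_lt, card_univ, Fintype.card_fin, min_eq_right hk] at this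
  omega

lemma unluckyGF_coeff_nonneg (d m k i : ℕ) : 0 ≤ (unluckyGF d m k).coeff i := by
  rw [unluckyGF, finsetSum_coeff]
  exact sum_nonneg fun w _ => by rw [coeff_X_pow]; split_ifs <;> norm_num

variable {d m : ℕ}

noncomputable def relabelPerm (hd : m + 1 ≤ d) (p : Fin d) : Equiv.Perm (Fin d) :=
  Equiv.ofBijective
    (fun x => ⟨relabel (min (p + 1) (m + 1)) m (x + 1) - 1, by
      have := x.isLt; unfold relabel; split_ifs <;> omega⟩)
    (Finite.injective_iff_bijective.mp fun x y h => by
      have hxy := relabel_injective (min_le_right _ _)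
        (Nat.sub_one_cancel (by unfold relabel; split_ifs <;> omega)
          (by unfold relabel; split_ifs <;> omega) (Fin.mk.inj_iff.mp h))
      exact Fin.ext (by omega))

lemma relabelPerm_val (hd : m + 1 ≤ d) (p x : Fin d) :
    (relabelPerm hd p x : ℕ) + 1 = relabel (min (p + 1) (m + 1)) m (x + 1) := by
  simp only [relabelPerm, Equiv.ofBijective_apply]
  unfold relabel; split_ifs <;> omega

lemma relabelPerm_lt_iff (hd : m + 1 ≤ d) {k : ℕ} (hk : k ≤ m + 1) (p x : Fin d) :
    ((x : ℕ) < k ∧ x ≠ p) ↔ (relabelPerm hd p x : ℕ) < if (p : ℕ) < k then k - 1 else k := by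
  have h := relabelPerm_val hd p x
  rw [Fin.ne_iff_vne]
  unfold relabel at h
  split_ifs at h ⊢ <;> omega

lemma forall_exists_cons_iff {α β : Type*} {m : ℕ} {P : α → Prop} {Q : β → Prop} (e : α ≃ β)
    (a : α) (hPQ : ∀ x, (P x ∧ x ≠ a) ↔ Q (e x)) (w : Fin m → α) :
    (∀ j, P j → ∃ i, (Fin.cons a w : Fin (m + 1) → α) i = j) ↔ ∀ j, Q j → ∃ i, e (w i) = j := by
  simp only [Fin.exists_fin_succ, Fin.cons_zero, Fin.cons_succ]
  refine e.forall_congr fun j => ?_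
  simp only [e.apply_eq_iff_eq, ← hPQ]
  constructor
  · rintro h ⟨hj, hja⟩
    exact (h hj).resolve_left (Ne.symm hja)
  · intro h hj
    by_cases hja : j = a
    · exact .inl hja.symm
    · exact .inr (h ⟨hj, hja⟩)

lemma unlucky_ofFn_cons (hd : m + 1 ≤ d) (p : Fin d) (w : Fin m → Fin d) :
    unlucky (m + 1) (List.ofFn fun i => ((Fin.cons p w : Fin (m + 1) → Fin d) i : ℕ) + 1) =
      (if (p : ℕ) < m + 1 then 0 else 1) +
        unlucky m (List.ofFn fun i => (relabelPerm hd p (w i) : ℕ) + 1) := by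
  rw [List.ofFn_succ, Fin.cons_zero, unlucky_cons (by omega), List.map_ofFn]
  simp only [Fin.cons_succ, Function.comp_def, relabelPerm_val]
  congr 1
  split_ifs <;> omega

lemma sum_pow_unlucky_cons (hd : m + 1 ≤ d) {k : ℕ} (hk : k ≤ m + 1) (p : Fin d) :
    ∑ w ∈ univ.filter (fun w : Fin m → Fin d =>
        ∀ j : Fin d, (j : ℕ) < k → ∃ i, (Fin.cons p w : Fin (m + 1) → Fin d) i = j),
      X ^ unlucky (m + 1) (List.ofFn fun i => ((Fin.cons p w : Fin (m + 1) → Fin d) i : ℕ) + 1) =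
    (if (p : ℕ) < m + 1 then 1 else X) * unluckyGF d m (if (p : ℕ) < k then k - 1 else k) := by
  rw [unluckyGF, mul_sum]
  refine sum_equiv (Equiv.piCongrRight fun _ => relabelPerm hd p) (fun w => ?_) (fun w _ => ?_)
  · simp only [mem_filter, mem_univ, true_and, Equiv.piCongrRight_apply]
    exact forall_exists_cons_iff _ p (relabelPerm_lt_iff hd hk p) w
  · rw [unlucky_ofFn_cons hd, pow_add]
    simp only [Equiv.piCongrRight_apply]
    split_ifs <;> simp

lemma unluckyGF_succ_eq_sum (hd : m + 1 ≤ d) {k : ℕ} (hk : k ≤ m + 1) :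
    unluckyGF d (m + 1) k =
      ∑ p : Fin d,
        (if (p : ℕ) < m + 1 then 1 else X) * unluckyGF d m (if (p : ℕ) < k then k - 1 else k) := by
  rw [unluckyGF, sum_filter, ← (Fin.consEquiv fun _ => Fin d).sum_comp, Fintype.sum_prod_type]
  refine sum_congr rfl fun p _ => ?_
  rw [← sum_pow_unlucky_cons hd hk p, sum_filter]
  rfl

lemma sum_range_ite_ite {M : Type*} [AddCommMonoid M] {a b c : ℕ} (hab : a ≤ b) (hbc : b ≤ c)
    (x y z : M) :
    ∑ p ∈ range c, (if p < a then x else if p < b then y else z) =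
      a • x + (b - a) • y + (c - b) • z := by
  obtain ⟨b, rfl⟩ := Nat.exists_eq_add_of_le hab
  obtain ⟨c, rfl⟩ := Nat.exists_eq_add_of_le hbc
  rw [sum_range_add, sum_range_add, sum_ite_of_true fun p hp => mem_range.mp hp,
    sum_ite_of_false fun p _ => by omega, sum_ite_of_true fun p hp => by simp at hp; omega,
    sum_ite_of_false fun p _ => by omega, sum_ite_of_false fun p _ => by omega]
  simp [add_assoc, Nat.add_sub_add_left]

lemma unluckyGF_succ (hd : m + 1 ≤ d) {k : ℕ} (hk : k ≤ d) :
    unluckyGF d (m + 1) k = C (k : ℤ) * unluckyGF d m (k - 1) +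
      (C ((d : ℤ) - (m + 1)) * X + C ((m : ℤ) + 1 - k)) * unluckyGF d m k := by
  rcases le_or_gt k (m + 1) with hkm | hkm
  · rw [unluckyGF_succ_eq_sum hd hkm]
    have hsummand : ∀ p : ℕ,
        (if p < m + 1 then 1 else X) * unluckyGF d m (if p < k then k - 1 else k) =
          if p < k then unluckyGF d m (k - 1) else if p < m + 1 then unluckyGF d m k
            else X * unluckyGF d m k := fun p => by
      split_ifs <;> first | omega | simp
    simp only [hsummand]
    rw [Fin.sum_univ_eq_sum_range (fun p => if p < k then unluckyGF d m (k - 1)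
      else if p < m + 1 then unluckyGF d m k else X * unluckyGF d m k), sum_range_ite_ite hkm hd]
    simp only [nsmul_eq_mul, ← C_eq_natCast]
    push_cast [hd, hkm]
    ring
  · rw [unluckyGF_eq_zero hkm hk, unluckyGF_eq_zero (by omega) (by omega),
      unluckyGF_eq_zero (by omega) hk]
    ring

theorem altSumPoly_eq_unluckyGF {d m k : ℕ} (hm : m ≤ d) (hk : k ≤ d) :
    altSumPoly d m k = unluckyGF d m k := by
  induction m generalizing k with
  | zero => rw [altSumPoly_zero, unluckyGF_zero hk]
  | succ m ih =>
    rw [altSumPoly_succ, unluckyGF_succ hm hk, ih (by omega) (by omega), ih (by omega) hk]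

end Parking

theorem stmt_16_general (n d k : ℕ) (hd : n ≤ d) (hk : k ≤ n) :
    (∑ j ∈ Finset.range (k + 1),
        (-1) ^ j * C ((k.choose j : ℤ)) *
          ∏ i ∈ Finset.range n, (C ((d : ℤ) - n + i) * X + C ((n : ℤ) - j - i)) : ℤ[X]) =
      (∑ w ∈ Finset.univ.filter
          (fun w : Fin n → Fin d => ∀ j : Fin d, (j : ℕ) < k → ∃ i, w i = j),
        X ^ unlucky n (List.ofFn fun i => (w i : ℕ) + 1)) ∧
    ∀ i : ℕ, 0 ≤ (∑ j ∈ Finset.range (k + 1),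
        (-1) ^ j * C ((k.choose j : ℤ)) *
          ∏ i ∈ Finset.range n, (C ((d : ℤ) - n + i) * X + C ((n : ℤ) - j - i)) : ℤ[X]).coeff i := by
  have key : Parking.altSumPoly d n k = Parking.unluckyGF d n k :=
    Parking.altSumPoly_eq_unluckyGF hd (hk.trans hd)
  refine ⟨key, fun i => ?_⟩
  change 0 ≤ (Parking.altSumPoly d n k).coeff i
  exact key ▸ Parking.unluckyGF_coeff_nonneg d n k i

theorem stmt_16 (n d k : ℕ) (hn : 0 < n) (hd : n ≤ d) (hk : k ≤ n) :
    (∑ j ∈ Finset.range (k + 1),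
        (-1) ^ j * C ((k.choose j : ℤ)) *
          ∏ i ∈ Finset.range n, (C ((d : ℤ) - n + i) * X + C ((n : ℤ) - j - i)) : ℤ[X]) =
      (∑ w ∈ Finset.univ.filter
          (fun w : Fin n → Fin d => ∀ j : Fin d, (j : ℕ) < k → ∃ i, w i = j),
        X ^ unlucky n (List.ofFn fun i => (w i : ℕ) + 1)) ∧
    ∀ i : ℕ, 0 ≤ (∑ j ∈ Finset.range (k + 1),
        (-1) ^ j * C ((k.choose j : ℤ)) *
          ∏ i ∈ Finset.range n, (C ((d : ℤ) - n + i) * X + C ((n : ℤ) - j - i)) : ℤ[X]).coeff i :=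
  stmt_16_general n d k hd hk
end
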